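/- arXiv:2509.22529 — 7 statements merged into one kernel-verified Lean document; each statement's English description precedes it below -/
import Mathlib

section
/- Let m ≥ 1 and let (V₁,…,V_{m+1}) be real-valued random variables whose joint distribution is invariant under every permutation of the m+1 coordinates. For 1 ≤ k ≤ m let V_{(k)} denote the k-th smallest value among V₁,…,V_m. Then P(V_{m+1} < V_{(k)}) ≤ k/(m+1), and consequently P(V_{m+1} ≥ V_{(k)}) ≥ 1 − k/(m+1). -/
/-!
Write `r_j = #{i | V_i ≤ V_j}` for the rank of `V_j` among all `m + 1` variables. The event
`V_{m+1} < V_{(k)}` says exactly that `r_{m+1} ≤ k`. By exchangeability every event `r_j ≤ k`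
has the same probability, and at most `k` of them occur at once: if they occur for the indices
in `S`, the largest `V_j` with `j ∈ S` has rank at least `#S`. Summing over `j` gives
`(m + 1) P(r_{m+1} ≤ k) ≤ k`; the second bound is the complementary event.
-/

open MeasureTheory

/-- The `k`-th smallest value (1-indexed) among `v 0, …, v (n-1)`. -/
noncomputable def kthSmallest {n : ℕ} (v : Fin n → ℝ) (k : ℕ) : ℝ :=
  ((Multiset.map v Finset.univ.val).sort (· ≤ ·)).getD (k - 1) 0

open Finset

theorem List.Pairwise.getElem_le_iff_lt_countP {α : Type*} [LinearOrder α] {l : List α}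
    (hl : l.Pairwise (· ≤ ·)) {i : ℕ} (hi : i < l.length) (x : α) :
    l[i] ≤ x ↔ i < l.countP (· ≤ x) := by
  induction l generalizing i with
  | nil => simp at hi
  | cons a t ih =>
    obtain ⟨ha, ht⟩ := List.pairwise_cons.1 hl
    by_cases hax : a ≤ x
    · rcases i with _ | i
      · simp [hax]
      · simp [hax, ih ht]
    · have hcount : t.countP (· ≤ x) = 0 := List.countP_eq_zero.2 fun b hb => by
        simpa using lt_of_lt_of_le (not_le.1 hax) (ha b hb)
      rcases i with _ | i
      · simp [hax, hcount]
      · simpa [hax, hcount] using lt_of_lt_of_le (not_le.1 hax) (ha _ (List.getElem_mem _))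

theorem lt_kthSmallest_iff {n : ℕ} (v : Fin n → ℝ) {k : ℕ} (hk1 : 1 ≤ k) (hkn : k ≤ n)
    (x : ℝ) : x < kthSmallest v k ↔ #{i | v i ≤ x} < k := by
  have hcount : ((Multiset.map v univ.val).sort (· ≤ ·)).countP (· ≤ x) = #{i | v i ≤ x} := by
    rw [← Multiset.coe_countP, Multiset.sort_eq, Multiset.countP_map]
    rfl
  rw [kthSmallest, List.getD_eq_getElem _ _ (by simp; omega), ← not_le,
    (Multiset.pairwise_sort _ _).getElem_le_iff_lt_countP, hcount]
  omega

def Exchangeable {Ω ι β : Type*} [MeasurableSpace Ω] [MeasurableSpace β]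
    (V : ι → Ω → β) (P : Measure Ω) : Prop :=
  ∀ π : Equiv.Perm ι,
    Measure.map (fun ω => fun i => V (π i) ω) P = Measure.map (fun ω => fun i => V i ω) P

theorem sum_measure_le_of_forall_card_mem_le {Ω ι : Type*} [MeasurableSpace Ω] [Fintype ι]
    (μ : Measure Ω) {E : ι → Set Ω} [∀ ω, DecidablePred (ω ∈ E ·)]
    (hE : ∀ j, MeasurableSet (E j)) {k : ℕ} (h : ∀ ω, #{j | ω ∈ E j} ≤ k) :
    ∑ j, μ (E j) ≤ k * μ Set.univ :=
  calc ∑ j, μ (E j) = ∫⁻ ω, ∑ j, (E j).indicator 1 ω ∂μ := by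
        rw [lintegral_finsetSum _ fun j _ => measurable_one.indicator (hE j)]
        simp [lintegral_indicator_one (hE _)]
    _ = ∫⁻ ω, (#{j | ω ∈ E j} : ENNReal) ∂μ := by
        simp [Set.indicator_apply, sum_boole]
    _ ≤ ∫⁻ _, (k : ENNReal) ∂μ := lintegral_mono fun ω => Nat.cast_le.2 (h ω)
    _ = k * μ Set.univ := lintegral_const _

theorem one_sub_measure_le_measure_compl {Ω : Type*} [MeasurableSpace Ω] (μ : Measure Ω)
    [IsProbabilityMeasure μ] (s : Set Ω) : 1 - μ s ≤ μ sᶜ :=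
  tsub_le_iff_left.2 <| by
    simpa only [measure_univ, Set.union_compl_self] using measure_union_le (μ := μ) s sᶜ

theorem le_ofReal_div_succ_of_succ_mul_le {x : ENNReal} {a b : ℕ} (h : (b + 1 : ℕ) * x ≤ a) :
    x ≤ ENNReal.ofReal (a / (b + 1)) := by
  rw [ENNReal.ofReal_div_of_pos (by positivity), ENNReal.ofReal_natCast,
    ← Nat.cast_succ, ENNReal.ofReal_natCast, ENNReal.le_div_iff_mul_le (by simp) (by simp),
    mul_comm]
  exact h

section Rank

variable {ι α : Type*} [Fintype ι] [LinearOrder α]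

def rank (w : ι → α) (j : ι) : ℕ := #{i | w i ≤ w j}

theorem rank_comp_equiv (w : ι → α) (σ : ι ≃ ι) (j : ι) :
    rank (fun i => w (σ i)) j = rank w (σ j) :=
  card_equiv σ (by simp)

theorem card_filter_rank_le_le (w : ι → α) (k : ℕ) : #{j | rank w j ≤ k} ≤ k := by
  obtain h | hne := eq_empty_or_nonempty {j | rank w j ≤ k}
  · simp [h]
  · obtain ⟨j, hj, hmax⟩ := exists_max_image _ w hne
    calc #{j | rank w j ≤ k} ≤ rank w j := card_le_card fun i hi => by simpa using hmax i hi
      _ ≤ k := (mem_filter.1 hj).2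

theorem rank_last {m : ℕ} (w : Fin (m + 1) → α) :
    rank w (Fin.last m) = #{i : Fin m | w i.castSucc ≤ w (Fin.last m)} + 1 := by
  simp only [rank, card_filter, Fin.sum_univ_castSucc, le_refl, if_true]

theorem measurable_rank (j : ι) : Measurable fun w : ι → ℝ => rank w j := by
  classical
  simp only [rank, card_filter]
  exact Finset.measurable_sum _ fun i _ => Measurable.ite
    (measurableSet_le (measurable_pi_apply i) (measurable_pi_apply j)) measurable_const
    measurable_const

theorem Exchangeable.card_mul_measure_rank_le {Ω : Type*} [MeasurableSpace Ω] [DecidableEq ι]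
    {P : Measure Ω} [IsProbabilityMeasure P] {V : ι → Ω → ℝ} (hexch : Exchangeable V P)
    (hV : ∀ i, Measurable (V i)) (j₀ : ι) (k : ℕ) :
    Fintype.card ι * P {ω | rank (fun i => V i ω) j₀ ≤ k} ≤ k := by
  set B : Set (ι → ℝ) := {w | rank w j₀ ≤ k}
  have hB : MeasurableSet B := measurableSet_le (measurable_rank j₀) measurable_const
  have hJ : Measurable fun ω i => V i ω := measurable_pi_lambda _ hV
  have hsame (j : ι) :
      P {ω | rank (fun i => V i ω) j ≤ k} = P {ω | rank (fun i => V i ω) j₀ ≤ k} := by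
    have hswap : {ω | rank (fun i => V i ω) j ≤ k} =
        (fun ω i => V (Equiv.swap j j₀ i) ω) ⁻¹' B := by
      ext ω
      simp [B, rank_comp_equiv (fun i => V i ω)]
    rw [hswap, ← Measure.map_apply (measurable_pi_lambda _ fun i => hV _) hB, hexch,
      Measure.map_apply hJ hB]
    rfl
  calc (Fintype.card ι : ENNReal) * P {ω | rank (fun i => V i ω) j₀ ≤ k}
      = ∑ j, P {ω | rank (fun i => V i ω) j ≤ k} := by simp [hsame]
    _ ≤ k * P Set.univ := sum_measure_le_of_forall_card_mem_le P
        (E := fun j => {ω | rank (fun i => V i ω) j ≤ k})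
        (fun j => measurableSet_le ((measurable_rank j).comp hJ) measurable_const)
        fun ω => card_filter_rank_le_le _ k
    _ = k := by simp

end Rank

theorem exchangeable_rank_bound_general
    {Ω : Type*} [MeasurableSpace Ω] (P : Measure Ω) [IsProbabilityMeasure P]
    (m : ℕ)
    (V : Fin (m + 1) → Ω → ℝ) (hV : ∀ i, Measurable (V i))
    (hexch : ∀ π : Equiv.Perm (Fin (m + 1)),
      Measure.map (fun ω => fun i => V (π i) ω) P
        = Measure.map (fun ω => fun i => V i ω) P)
    (k : ℕ) (hk1 : 1 ≤ k) (hkm : k ≤ m) :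
    P {ω | V (Fin.last m) ω < kthSmallest (fun i : Fin m => V i.castSucc ω) k}
        ≤ ENNReal.ofReal ((k : ℝ) / (m + 1))
      ∧ P {ω | kthSmallest (fun i : Fin m => V i.castSucc ω) k ≤ V (Fin.last m) ω}
        ≥ ENNReal.ofReal (1 - (k : ℝ) / (m + 1)) := by
  set A := {ω | V (Fin.last m) ω < kthSmallest (fun i : Fin m => V i.castSucc ω) k}
  have hA : A = {ω | rank (fun i => V i ω) (Fin.last m) ≤ k} := by
    ext ω
    simp only [A, Set.mem_ofPred_eq, lt_kthSmallest_iff _ hk1 hkm, rank_last]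
    omega
  have hupper : P A ≤ ENNReal.ofReal ((k : ℝ) / (m + 1)) := by
    have hcard := Exchangeable.card_mul_measure_rank_le hexch hV (Fin.last m) k
    rw [Fintype.card_fin] at hcard
    exact hA ▸ le_ofReal_div_succ_of_succ_mul_le hcard
  have hAc : {ω | kthSmallest (fun i : Fin m => V i.castSucc ω) k ≤ V (Fin.last m) ω} = Aᶜ := by
    ext ω
    simp [A]
  refine ⟨hupper, ?_⟩
  calc ENNReal.ofReal (1 - (k : ℝ) / (m + 1))
      = 1 - ENNReal.ofReal ((k : ℝ) / (m + 1)) := by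
        rw [ENNReal.ofReal_sub _ (by positivity), ENNReal.ofReal_one]
    _ ≤ 1 - P A := tsub_le_tsub_left hupper 1
    _ ≤ _ := hAc ▸ one_sub_measure_le_measure_compl P A

/-- **Exchangeable rank bound.** If `(V₁, …, V_{m+1})` is exchangeable and `V_{(k)}` denotes
the `k`-th smallest among the first `m` of them (`1 ≤ k ≤ m`), then
`P(V_{m+1} < V_{(k)}) ≤ k/(m+1)` and `P(V_{m+1} ≥ V_{(k)}) ≥ 1 - k/(m+1)`. -/
theorem exchangeable_rank_bound
    {Ω : Type*} [MeasurableSpace Ω] (P : Measure Ω) [IsProbabilityMeasure P]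
    (m : ℕ) (hm : 1 ≤ m)
    (V : Fin (m + 1) → Ω → ℝ) (hV : ∀ i, Measurable (V i))
    (hexch : ∀ π : Equiv.Perm (Fin (m + 1)),
      Measure.map (fun ω => fun i => V (π i) ω) P
        = Measure.map (fun ω => fun i => V i ω) P)
    (k : ℕ) (hk1 : 1 ≤ k) (hkm : k ≤ m) :
    P {ω | V (Fin.last m) ω < kthSmallest (fun i : Fin m => V i.castSucc ω) k}
        ≤ ENNReal.ofReal ((k : ℝ) / (m + 1))
      ∧ P {ω | kthSmallest (fun i : Fin m => V i.castSucc ω) k ≤ V (Fin.last m) ω}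
        ≥ ENNReal.ofReal (1 - (k : ℝ) / (m + 1)) :=
  exchangeable_rank_bound_general P m V hV hexch k hk1 hkm
end

section
/- There exists an absolute constant c > 0 with the following property. Let L ≥ 0, σ > 0, n ≥ 1, let f : ℝ → ℝ be L-Lipschitz, and let δ₁,…,δ_n be independent random variables each distributed N(0, σ²). Then for every η ∈ (0,1), with probability at least 1 − η, sup_{x ∈ ℝ} | f(x) − (1/n) Σ_{i=1}^n f(x + δ_i) | ≤ L σ √(2/π) + L σ √( log(2/η) / (c n) ). -/
/-!
By the Lipschitz bound the deviation is at most `L` times the sample mean of the `|δᵢ|`,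
uniformly in `x`. Centred at its mean `σ√(2/π)`, `|δ|` has a sub-Gaussian moment generating
function with variance proxy `2σ²`: for `t ≥ 0` because
`exp (t|x|) ≤ exp (tx) + exp (-tx) - 1 + t|x|`, and for `t ≤ 0` because `|δ| ≥ 0` and
`exp (-y) ≤ 1 - y + y²/2` for `y ≥ 0`. Hoeffding's inequality for independent sub-Gaussian
variables then gives the claim with `c = 1/4`.
-/

open MeasureTheory ProbabilityTheory Real
open scoped NNReal

lemma Real.exp_neg_le_one_sub_add_sq_div_two {y : ℝ} (hy : 0 ≤ y) :
    exp (-y) ≤ 1 - y + y ^ 2 / 2 := by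
  rw [exp_neg, inv_le_iff_one_le_mul₀ (exp_pos y)]
  calc (1 : ℝ) ≤ (1 - y + y ^ 2 / 2) * (1 + y + y ^ 2 / 2) := by nlinarith [pow_nonneg hy 4]
    _ ≤ (1 - y + y ^ 2 / 2) * exp y := by
      gcongr
      · nlinarith
      · exact quadratic_le_exp_of_nonneg hy

lemma Real.exp_mul_abs_le (t x : ℝ) :
    exp (t * |x|) ≤ exp (t * x) + exp (-(t * x)) - 1 + t * |x| := by
  rcases abs_cases x with ⟨hx, -⟩ | ⟨hx, -⟩
  · rw [hx]
    linarith [add_one_le_exp (-(t * x))]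
  · rw [hx, mul_neg]
    linarith [add_one_le_exp (t * x)]

lemma integral_mul_exp_neg_mul_sq_Ioi {b : ℝ} (hb : 0 < b) :
    ∫ x in Set.Ioi (0 : ℝ), x * exp (-b * x ^ 2) = (2 * b)⁻¹ := by
  apply Complex.ofReal_injective
  rw [← integral_complex_ofReal]
  push_cast
  exact integral_mul_cexp_neg_mul_sq (by simpa using hb)

lemma abs_sub_smoothing_le {f : ℝ → ℝ} {L : ℝ} (hf : ∀ x y, |f x - f y| ≤ L * |x - y|)
    {n : ℕ} (hn : n ≠ 0) (d : Fin n → ℝ) (x : ℝ) :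
    |f x - (1 / n : ℝ) * ∑ i, f (x + d i)| ≤ L * ((1 / n : ℝ) * ∑ i, |d i|) := by
  have hmean :
      f x - (1 / n : ℝ) * ∑ i, f (x + d i) = (1 / n : ℝ) * ∑ i, (f x - f (x + d i)) := by
    rw [Finset.sum_sub_distrib, Finset.sum_const, Finset.card_univ, Fintype.card_fin,
      nsmul_eq_mul]
    field_simp
  rw [hmean, abs_mul, abs_of_pos (by positivity)]
  calc (1 / n : ℝ) * |∑ i, (f x - f (x + d i))| ≤ (1 / n : ℝ) * ∑ i, L * |d i| := by
        gcongr
        refine (Finset.abs_sum_le_sum_abs _ _).trans (Finset.sum_le_sum fun i _ ↦ ?_)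
        simpa only [sub_add_cancel_left, abs_neg] using hf x (x + d i)
    _ = L * ((1 / n : ℝ) * ∑ i, |d i|) := by
        rw [← Finset.mul_sum]
        ring

namespace ProbabilityTheory

lemma integral_abs_gaussianReal (v : ℝ≥0) :
    ∫ x, |x| ∂gaussianReal 0 v = √(2 * v / π) := by
  rcases eq_or_ne v 0 with rfl | hv
  · simp
  have hv' : (0 : ℝ) < v := by positivity
  calc ∫ x, |x| ∂gaussianReal 0 v
      = (√(2 * π * v))⁻¹ * ∫ x, |x| * exp (-(2 * (v : ℝ))⁻¹ * |x| ^ 2) := by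
        rw [integral_gaussianReal_eq_integral_smul hv, ← integral_const_mul]
        congr 1 with x
        simp only [gaussianPDFReal, smul_eq_mul, sub_zero, sq_abs]
        ring_nf
    _ = (√(2 * π * v))⁻¹ * (2 * (2 * (2 * (v : ℝ))⁻¹)⁻¹) := by
        rw [integral_comp_abs (f := fun x => x * exp (-(2 * (v : ℝ))⁻¹ * x ^ 2)),
          integral_mul_exp_neg_mul_sq_Ioi (by positivity)]
    _ = √(2 * v / π) := by
        rw [show 2 * (v : ℝ) / π = (2 * v) ^ 2 / (2 * π * v) by field_simp,
          sqrt_div' _ (by positivity), sqrt_sq (by positivity)]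
        field_simp

lemma integral_sq_gaussianReal (v : ℝ≥0) : ∫ x, x ^ 2 ∂gaussianReal 0 v = v := by
  simpa [variance_eq_integral measurable_id'.aemeasurable, integral_id_gaussianReal] using
    variance_fun_id_gaussianReal (μ := 0) (v := v)

lemma hasSubgaussianMGF_gaussianReal (v : ℝ≥0) :
    HasSubgaussianMGF (fun x ↦ x) v (gaussianReal 0 v) where
  integrable_exp_mul := integrable_exp_mul_gaussianReal
  mgf_le t := by simp [mgf_fun_id_gaussianReal]

variable {Ω : Type*} {mΩ : MeasurableSpace Ω} {μ : Measure Ω}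

lemma mgf_sub_integral_le_of_nonneg_of_nonpos [IsProbabilityMeasure μ] {Y : Ω → ℝ} (hY : ∀ ω, 0 ≤ Y ω)
    (hY2 : MemLp Y 2 μ) {t : ℝ} (ht : t ≤ 0) :
    mgf (fun ω ↦ Y ω - μ[Y]) μ t ≤ exp (μ[fun ω ↦ Y ω ^ 2] * t ^ 2 / 2) := by
  set m := μ[Y]
  set s := μ[fun ω ↦ Y ω ^ 2]
  have hY_int : Integrable Y μ := hY2.integrable one_le_two
  have hexp_int : Integrable (fun ω ↦ exp (t * Y ω)) μ := by
    refine (integrable_const (1 : ℝ)).mono'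
      (measurable_exp.comp_aemeasurable
        (hY_int.aemeasurable.const_mul t)).aestronglyMeasurable
      (ae_of_all _ fun ω ↦ ?_)
    rw [norm_of_nonneg (exp_pos _).le, exp_le_one_iff]
    exact mul_nonpos_of_nonpos_of_nonneg ht (hY ω)
  have hlin : Integrable (fun ω ↦ 1 + t * Y ω) μ := (integrable_const 1).add (hY_int.const_mul t)
  have hsq : Integrable (fun ω ↦ t ^ 2 / 2 * Y ω ^ 2) μ := hY2.integrable_sq.const_mul _
  have hquad : mgf Y μ t ≤ 1 + t * m + s * t ^ 2 / 2 := by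
    calc mgf Y μ t ≤ ∫ ω, (1 + t * Y ω + t ^ 2 / 2 * Y ω ^ 2) ∂μ := by
          refine integral_mono hexp_int (hlin.add hsq) fun ω ↦ ?_
          have := exp_neg_le_one_sub_add_sq_div_two (y := -(t * Y ω))
            (neg_nonneg.mpr (mul_nonpos_of_nonpos_of_nonneg ht (hY ω)))
          rw [neg_neg, neg_sq, mul_pow] at this
          linarith
      _ = 1 + t * m + s * t ^ 2 / 2 := by
          rw [integral_add hlin hsq, integral_add (integrable_const 1) (hY_int.const_mul t),
            integral_const_mul, integral_const_mul]
          simp only [integral_const, probReal_univ, smul_eq_mul, mul_one, m, s]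
          ring
  calc mgf (fun ω ↦ Y ω - m) μ t = mgf Y μ t * exp (t * -m) := by
        simp_rw [sub_eq_add_neg]
        exact mgf_add_const _
    _ ≤ exp (t * m + s * t ^ 2 / 2) * exp (t * -m) := by
        gcongr
        linarith [add_one_le_exp (t * m + s * t ^ 2 / 2)]
    _ = exp (s * t ^ 2 / 2) := by
        rw [← exp_add]
        ring_nf

namespace HasSubgaussianMGF

variable {X : Ω → ℝ} {c : ℝ≥0}

lemma integrable_exp_mul_abs (h : HasSubgaussianMGF X c μ) (t : ℝ) :
    Integrable (fun ω ↦ exp (t * |X ω|)) μ := by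
  refine ((h.integrable_exp_mul t).add (h.integrable_exp_mul (-t))).mono'
    (measurable_exp.comp_aemeasurable
      (h.aemeasurable.abs.const_mul t)).aestronglyMeasurable (ae_of_all _ fun ω ↦ ?_)
  rw [norm_of_nonneg (exp_pos _).le, Pi.add_apply]
  rcases abs_cases (X ω) with ⟨hX, -⟩ | ⟨hX, -⟩ <;> rw [hX]
  · linarith [exp_pos (-t * X ω)]
  · rw [mul_neg, ← neg_mul]
    linarith [exp_pos (t * X ω)]

lemma mgf_abs_sub_integral_le [IsProbabilityMeasure μ] (h : HasSubgaussianMGF X c μ) {t : ℝ}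
    (ht : 0 ≤ t) :
    mgf (fun ω ↦ |X ω| - μ[fun ω ↦ |X ω|]) μ t ≤ exp (↑(2 * c) * t ^ 2 / 2) := by
  set m := μ[fun ω ↦ |X ω|]
  have hm : 0 ≤ m := integral_nonneg fun ω ↦ abs_nonneg (X ω)
  set A := exp (c * t ^ 2 / 2)
  have hA : 1 ≤ A := one_le_exp (by positivity)
  have habs : mgf (fun ω ↦ |X ω|) μ t ≤ 2 * A - 1 + t * m := by
    have hint_neg : Integrable (fun ω ↦ exp (-(t * X ω))) μ := by
      simpa only [neg_mul] using h.integrable_exp_mul (-t)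
    have hint_exp : Integrable (fun ω ↦ exp (t * X ω) + exp (-(t * X ω))) μ :=
      (h.integrable_exp_mul t).add hint_neg
    have hint_cosh : Integrable (fun ω ↦ exp (t * X ω) + exp (-(t * X ω)) - 1) μ :=
      hint_exp.sub (integrable_const 1)
    have hint_abs : Integrable (fun ω ↦ t * |X ω|) μ := h.integrable.abs.const_mul t
    calc mgf (fun ω ↦ |X ω|) μ t
        ≤ ∫ ω, (exp (t * X ω) + exp (-(t * X ω)) - 1 + t * |X ω|) ∂μ :=
          integral_mono (h.integrable_exp_mul_abs t) (hint_cosh.add hint_abs)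
            fun ω ↦ exp_mul_abs_le t (X ω)
      _ = mgf X μ t + mgf X μ (-t) - 1 + t * m := by
          rw [integral_add hint_cosh hint_abs, integral_sub hint_exp
            (integrable_const 1), integral_add (h.integrable_exp_mul t) hint_neg,
            integral_const_mul]
          simp [mgf, m]
      _ ≤ 2 * A - 1 + t * m := by
          have h1 := h.mgf_le t
          have h2 := h.mgf_le (-t)
          rw [neg_sq] at h2
          linarith
  calc mgf (fun ω ↦ |X ω| - m) μ t = mgf (fun ω ↦ |X ω|) μ t * exp (t * -m) := by
        simp_rw [sub_eq_add_neg]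
        exact mgf_add_const _
    _ ≤ A ^ 2 * exp (t * m) * exp (t * -m) := by
        gcongr
        have hb : 0 ≤ t * m := mul_nonneg ht hm
        nlinarith [add_one_le_exp (t * m), sq_nonneg (A - 1)]
    _ = exp (↑(2 * c) * t ^ 2 / 2) := by
        rw [mul_assoc, ← exp_add, ← exp_nat_mul, ← exp_add]
        push_cast
        ring_nf

lemma abs_sub_integral [IsProbabilityMeasure μ] (h : HasSubgaussianMGF X c μ)
    (h2 : μ[fun ω ↦ X ω ^ 2] ≤ (c : ℝ)) :
    HasSubgaussianMGF (fun ω ↦ |X ω| - μ[fun ω ↦ |X ω|]) (2 * c) μ where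
  integrable_exp_mul t := by
    simpa only [mul_sub, exp_sub] using
      (h.integrable_exp_mul_abs t).div_const (exp (t * μ[fun ω ↦ |X ω|]))
  mgf_le t := by
    rcases le_total 0 t with ht | ht
    · exact h.mgf_abs_sub_integral_le ht
    · refine (mgf_sub_integral_le_of_nonneg_of_nonpos (fun ω ↦ abs_nonneg (X ω)) (h.memLp 2).abs
        ht).trans ?_
      simp only [sq_abs]
      gcongr
      push_cast
      linarith [c.coe_nonneg]

end HasSubgaussianMGF

lemma hasSubgaussianMGF_abs_sub_gaussianReal (v : ℝ≥0) :
    HasSubgaussianMGF (fun x ↦ |x| - √(2 * v / π)) (2 * v) (gaussianReal 0 v) := by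
  simpa only [integral_abs_gaussianReal] using
    (hasSubgaussianMGF_gaussianReal v).abs_sub_integral (integral_sq_gaussianReal v).le

lemma measureReal_sum_abs_sub_ge_le {ι : Type*} [Fintype ι] [IsProbabilityMeasure μ]
    {v : ℝ≥0} {δ : ι → Ω → ℝ} (hδ : ∀ i, Measurable (δ i)) (hind : iIndepFun δ μ)
    (hlaw : ∀ i, μ.map (δ i) = gaussianReal 0 v) {ε : ℝ} (hε : 0 ≤ ε) :
    μ.real {ω | ε ≤ ∑ i, (|δ i ω| - √(2 * v / π))}
      ≤ exp (-ε ^ 2 / (4 * Fintype.card ι * v)) := by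
  have hsub (i : ι) : HasSubgaussianMGF (fun ω ↦ |δ i ω| - √(2 * v / π)) (2 * v) μ :=
    .of_map (X := fun x ↦ |x| - √(2 * v / π)) (hδ i).aemeasurable
      (hlaw i ▸ hasSubgaussianMGF_abs_sub_gaussianReal v)
  have hind' : iIndepFun (fun i ω ↦ |δ i ω| - √(2 * v / π)) μ :=
    hind.comp (fun _ x ↦ |x| - √(2 * v / π)) fun _ ↦ by fun_prop
  convert HasSubgaussianMGF.measure_sum_ge_le_of_iIndepFun hind' (s := Finset.univ)
    (fun i _ ↦ hsub i) hε using 3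
  push_cast
  rw [Finset.sum_const, Finset.card_univ, nsmul_eq_mul]
  ring

lemma measureReal_mean_abs_ge_le [IsProbabilityMeasure μ] {n : ℕ} (hn : n ≠ 0) {σ : ℝ}
    (hσ : 0 < σ) {δ : Fin n → Ω → ℝ} (hδ : ∀ i, Measurable (δ i)) (hind : iIndepFun δ μ)
    (hlaw : ∀ i, μ.map (δ i) = gaussianReal 0 (σ ^ 2).toNNReal) {r : ℝ} (hr : 0 ≤ r) :
    μ.real {ω | σ * √(2 / π) + r ≤ (1 / n : ℝ) * ∑ i, |δ i ω|}
      ≤ exp (-(n * r ^ 2) / (4 * σ ^ 2)) := by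
  have hn' : (0 : ℝ) < n := by positivity
  have hv : ((σ ^ 2).toNNReal : ℝ) = σ ^ 2 := coe_toNNReal _ (sq_nonneg σ)
  have hmean : √(2 * (σ ^ 2).toNNReal / π) = σ * √(2 / π) := by
    rw [hv, show 2 * σ ^ 2 / π = σ ^ 2 * (2 / π) by ring, sqrt_mul (sq_nonneg σ),
      sqrt_sq hσ.le]
  have hset : {ω | σ * √(2 / π) + r ≤ (1 / n : ℝ) * ∑ i, |δ i ω|}
      = {ω | n * r ≤ ∑ i, (|δ i ω| - √(2 * (σ ^ 2).toNNReal / π))} := by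
    ext ω
    simp only [Set.mem_ofPred_eq, Finset.sum_sub_distrib, Finset.sum_const, Finset.card_univ,
      Fintype.card_fin, nsmul_eq_mul, hmean]
    rw [div_mul_eq_mul_div, one_mul, le_div_iff₀ hn']
    constructor <;> intro h <;> linarith
  rw [hset]
  convert measureReal_sum_abs_sub_ge_le (ε := n * r) hδ hind hlaw (by positivity) using 2
  rw [Fintype.card_fin, hv]
  field_simp

end ProbabilityTheory

/-- **Hoeffding-type bound for randomized smoothing.** There is an absolute constant `c > 0`
such that for any `L`-Lipschitz `f` and i.i.d. `N(0,σ²)` noises `δ₁, …, δₙ`, with probability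
at least `1 - η` the randomized-smoothing average is uniformly within
`Lσ√(2/π) + Lσ√(log(2/η)/(cn))` of `f`. -/
theorem randomized_smoothing_concentration :
    ∃ c : ℝ, 0 < c ∧
      ∀ (Ω : Type) [MeasurableSpace Ω] (P : Measure Ω) [IsProbabilityMeasure P]
        (L σ : ℝ) (_ : 0 ≤ L) (_ : 0 < σ) (n : ℕ) (_ : 1 ≤ n)
        (f : ℝ → ℝ) (_ : ∀ x y, |f x - f y| ≤ L * |x - y|)
        (δ : Fin n → Ω → ℝ) (_ : ∀ i, Measurable (δ i))
        (_ : iIndepFun δ P)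
        (_ : ∀ i, Measure.map (δ i) P = gaussianReal 0 (Real.toNNReal (σ ^ 2)))
        (η : ℝ) (_ : η ∈ Set.Ioo (0 : ℝ) 1),
        P {ω | ∀ x : ℝ, |f x - (1 / n : ℝ) * ∑ i, f (x + δ i ω)|
              ≤ L * σ * Real.sqrt (2 / Real.pi)
                + L * σ * Real.sqrt (Real.log (2 / η) / (c * n))}
          ≥ ENNReal.ofReal (1 - η) := by
  refine ⟨1 / 4, by norm_num, ?_⟩
  intro Ω _ P _ L σ hL hσ n hn f hf δ hδ hind hlaw η ⟨hη0, hη1⟩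
  have hlog : 0 < log (2 / η) := log_pos (by rw [lt_div_iff₀ hη0]; linarith)
  set r := σ * √(log (2 / η) / (1 / 4 * n))
  set bad := {ω | σ * √(2 / π) + r ≤ (1 / n : ℝ) * ∑ i, |δ i ω|}
  have hbad : P.real bad ≤ η := by
    refine (measureReal_mean_abs_ge_le (by omega) hσ hδ hind hlaw (by positivity)).trans ?_
    have hn' : (0 : ℝ) < n := by exact_mod_cast hn
    rw [mul_pow, sq_sqrt (by positivity), show -(n * (σ ^ 2 * (log (2 / η) / (1 / 4 * n))))
      / (4 * σ ^ 2) = -log (2 / η) by field_simp, exp_neg, exp_log (by positivity), inv_div]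
    linarith
  have hbad_meas : MeasurableSet bad := measurableSet_le measurable_const (by fun_prop)
  calc ENNReal.ofReal (1 - η) ≤ ENNReal.ofReal (P.real badᶜ) := by
        rw [probReal_compl_eq_one_sub hbad_meas]
        gcongr
    _ = P badᶜ := ofReal_measureReal
    _ ≤ _ := by
        refine measure_mono fun ω hω x ↦
          (abs_sub_smoothing_le hf (by omega) (δ · ω) x).trans ?_
        have hmean : (1 / n : ℝ) * ∑ i, |δ i ω| < σ * √(2 / π) + r := lt_of_not_ge hω
        nlinarith
end

section
/- Let L ≥ 0, σ > 0, let f : ℝ → ℝ be L-Lipschitz, and let δ₁, δ₂, … be an i.i.d. sequence of N(0, σ²) random variables. Then almost surely, sup_{x ∈ ℝ} | (1/n) Σ_{i=1}^n f(x + δ_i) − ∫_ℝ f(x + u) φ_σ(u) du | → 0 as n → ∞; that is, the randomized-smoothing estimates converge uniformly on ℝ to the Gaussian convolution φ_σ * f almost surely. -/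
/-!
Put `g_x u = f (x + u) - f x`: every `g_x` is `L`-Lipschitz and vanishes at `0`. Replacing `g_x` on
`[-N, N)` by its values on the grid `ℤ / N` costs at most `L / N` plus `L` times the first absolute
moment outside `[-N, N)`, and the integrals of the resulting step function against two measures
differ by a combination of the differences of the masses of the `2 N²` grid cells, with
coefficients bounded by `L N` independently of `x`. The strong law of large numbers, applied to
the countably many cell indicators and truncated moments, makes all these quantities converge
almost surely, which gives convergence uniform in `x`.
-/

open MeasureTheory ProbabilityTheory

/-- The density of the centered Gaussian distribution `N(0, σ²)` on `ℝ`. -/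
noncomputable def gaussianKernel (σ u : ℝ) : ℝ :=
  (σ * Real.sqrt (2 * Real.pi))⁻¹ * Real.exp (-(u ^ 2) / (2 * σ ^ 2))

open Filter Set
open scoped Topology ENNReal NNReal

-- An `ℝ≥0` coefficient keeps the measure finite also for `n = 0`, where it is `0`.
noncomputable def empiricalMeasure {α : Type*} [MeasurableSpace α] (a : ℕ → α) (n : ℕ) :
    Measure α :=
  (n : ℝ≥0)⁻¹ • ∑ i ∈ Finset.range n, Measure.dirac (a i)

section empiricalMeasure

variable {α : Type*} [MeasurableSpace α] (a : ℕ → α)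

lemma isProbabilityMeasure_empiricalMeasure {n : ℕ} (hn : n ≠ 0) :
    IsProbabilityMeasure (empiricalMeasure a n) := by
  constructor
  simp [empiricalMeasure, ENNReal.smul_def, ENNReal.coe_inv, hn, ENNReal.inv_mul_cancel]

variable (n : ℕ) [MeasurableSingletonClass α]

lemma integrable_empiricalMeasure (h : α → ℝ) : Integrable h (empiricalMeasure a n) :=
  (integrable_finsetSum_measure.2 fun _ _ => integrable_dirac enorm_lt_top).smul_measure_nnreal

lemma integral_empiricalMeasure (h : α → ℝ) :
    ∫ x, h x ∂empiricalMeasure a n = (n : ℝ)⁻¹ * ∑ i ∈ Finset.range n, h (a i) := by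
  simp [empiricalMeasure, integral_smul_nnreal_measure,
    integral_finsetSum_measure fun _ _ => integrable_dirac enorm_lt_top, NNReal.smul_def]

end empiricalMeasure

def gridCell (N : ℕ) (j : ℤ) : Set ℝ := Ico (j / N) ((j + 1) / N)

lemma mem_gridCell_iff {N : ℕ} (hN : 0 < N) {j : ℤ} {u : ℝ} :
    u ∈ gridCell N j ↔ ⌊u * N⌋ = j := by
  have hN' : (0 : ℝ) < N := by exact_mod_cast hN
  rw [Int.floor_eq_iff, gridCell, mem_Ico, div_le_iff₀ hN', lt_div_iff₀ hN']

lemma measurableSet_gridCell (N : ℕ) (j : ℤ) : MeasurableSet (gridCell N j) :=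
  measurableSet_Ico

noncomputable def stepApprox (g : ℝ → ℝ) (N : ℕ) (u : ℝ) : ℝ :=
  ∑ j ∈ Finset.Ico (-(N : ℤ) ^ 2) (N ^ 2), g (j / N) * (gridCell N j).indicator 1 u

lemma floor_mul_natCast_mem_Ico_iff {N : ℕ} {u : ℝ} :
    ⌊u * N⌋ ∈ Finset.Ico (-(N : ℤ) ^ 2) (N ^ 2) ↔ u ∈ Ico (-(N : ℝ)) N := by
  rcases N.eq_zero_or_pos with rfl | hN
  · simp
  have hN' : (0 : ℝ) < N := by exact_mod_cast hN
  rw [Finset.mem_Ico, Int.le_floor, Int.floor_lt, mem_Ico]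
  push_cast
  rw [sq, ← neg_mul, mul_le_mul_iff_left₀ hN', mul_lt_mul_iff_left₀ hN']

lemma abs_div_natCast_le_of_mem_Ico {N : ℕ} {j : ℤ}
    (hj : j ∈ Finset.Ico (-(N : ℤ) ^ 2) (N ^ 2)) :
    |(j : ℝ) / N| ≤ N := by
  rw [Finset.mem_Ico] at hj
  have hj' : |(j : ℝ)| ≤ (N : ℝ) ^ 2 := by
    rw [abs_le]; exact ⟨by exact_mod_cast hj.1, by exact_mod_cast hj.2.le⟩
  rw [abs_div, Nat.abs_cast]
  rcases N.eq_zero_or_pos with rfl | hN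
  · simp
  rw [div_le_iff₀ (by exact_mod_cast hN), ← sq]
  exact hj'

lemma stepApprox_of_mem_Ico {g : ℝ → ℝ} {N : ℕ} {u : ℝ} (hu : u ∈ Ico (-(N : ℝ)) N) :
    stepApprox g N u = g (⌊u * N⌋ / N) := by
  have hN : 0 < N := by exact_mod_cast (show (0 : ℝ) < N by linarith [hu.1, hu.2])
  rw [stepApprox, Finset.sum_eq_single_of_mem _ (floor_mul_natCast_mem_Ico_iff.2 hu)]
  · simp [indicator_of_mem ((mem_gridCell_iff hN).2 rfl)]
  · intro j _ hj
    simp [indicator_of_notMem (mt (mem_gridCell_iff hN).1 (Ne.symm hj))]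

lemma stepApprox_of_notMem_Ico {g : ℝ → ℝ} {N : ℕ} {u : ℝ} (hu : u ∉ Ico (-(N : ℝ)) N) :
    stepApprox g N u = 0 := by
  refine Finset.sum_eq_zero fun j hj => ?_
  rcases N.eq_zero_or_pos with rfl | hN
  · simp at hj
  have hu' : u ∉ gridCell N j := fun huj =>
    hu (floor_mul_natCast_mem_Ico_iff.1 ((mem_gridCell_iff hN).1 huj ▸ hj))
  rw [indicator_of_notMem hu', mul_zero]

noncomputable def tailAbs (N : ℕ) : ℝ → ℝ := {u | (N : ℝ) ≤ |u|}.indicator (|·|)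

lemma tailAbs_nonneg (N : ℕ) (u : ℝ) : 0 ≤ tailAbs N u :=
  indicator_nonneg (fun _ _ => abs_nonneg _) u

lemma abs_sub_stepApprox_le {K : ℝ≥0} {g : ℝ → ℝ} (hg : LipschitzWith K g) (hg0 : g 0 = 0)
    (N : ℕ) (u : ℝ) : |g u - stepApprox g N u| ≤ K / N + K * tailAbs N u := by
  by_cases hu : u ∈ Ico (-(N : ℝ)) N
  · have hN : (0 : ℝ) < N := by linarith [hu.1, hu.2]
    have hfract : |u - ⌊u * N⌋ / N| ≤ 1 / N := by
      rw [show u - ⌊u * N⌋ / N = Int.fract (u * N) / N by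
        rw [Int.fract]; field_simp, abs_div, abs_of_nonneg (Int.fract_nonneg _), abs_of_pos hN]
      gcongr
      exact (Int.fract_lt_one _).le
    rw [stepApprox_of_mem_Ico hu]
    calc |g u - g (⌊u * N⌋ / N)| ≤ K * |u - ⌊u * N⌋ / N| := by
          simpa [Real.dist_eq] using hg.dist_le_mul u _
      _ ≤ K * (1 / N) := by gcongr
      _ ≤ K / N + K * tailAbs N u := by
          rw [mul_one_div]
          exact le_add_of_nonneg_right (mul_nonneg K.2 (tailAbs_nonneg N u))
  · have hNu : (N : ℝ) ≤ |u| := by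
      rw [mem_Ico, not_and_or, not_le, not_lt] at hu
      rcases hu with hu | hu
      · exact le_abs.2 (Or.inr (by linarith))
      · exact le_abs.2 (Or.inl hu)
    rw [stepApprox_of_notMem_Ico hu, sub_zero, tailAbs, indicator_of_mem (show u ∈ _ from hNu)]
    calc |g u| ≤ K * |u| := by simpa [Real.dist_eq, hg0] using hg.dist_le_mul u 0
      _ ≤ K / N + K * |u| := le_add_of_nonneg_left (by positivity)

lemma measurable_tailAbs (N : ℕ) : Measurable (tailAbs N) :=
  measurable_abs.indicator (measurableSet_le measurable_const measurable_abs)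

section

variable {μ ν : Measure ℝ}

lemma integrable_tailAbs (hμ : Integrable id μ) (N : ℕ) : Integrable (tailAbs N) μ :=
  hμ.abs.indicator (measurableSet_le measurable_const measurable_abs)

lemma tendsto_integral_tailAbs (hμ : Integrable id μ) :
    Tendsto (fun N : ℕ => ∫ u, tailAbs N u ∂μ) atTop (𝓝 0) := by
  have hs : ∀ N : ℕ, MeasurableSet {u : ℝ | (N : ℝ) ≤ |u|} :=
    fun N => measurableSet_le measurable_const measurable_abs
  have hanti : Antitone fun N : ℕ => {u : ℝ | (N : ℝ) ≤ |u|} :=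
    fun M N hMN u (hu : (N : ℝ) ≤ |u|) => (Nat.cast_le.2 hMN).trans hu
  have hempty : ⋂ N : ℕ, {u : ℝ | (N : ℝ) ≤ |u|} = ∅ :=
    eq_empty_of_forall_notMem fun u hu => (exists_nat_gt |u|).elim fun N hN =>
      hN.not_ge (mem_iInter.1 hu N)
  simpa [tailAbs, integral_indicator (hs _), hempty] using
    tendsto_setIntegral_of_antitone hs hanti ⟨0, hμ.abs.integrableOn⟩

lemma integrable_stepApprox [IsFiniteMeasure μ] (g : ℝ → ℝ) (N : ℕ) :
    Integrable (stepApprox g N) μ :=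
  integrable_finsetSum _ fun j _ =>
    ((integrable_const 1).indicator (measurableSet_gridCell N j)).const_mul _

lemma integral_stepApprox [IsFiniteMeasure μ] (g : ℝ → ℝ) (N : ℕ) :
    ∫ u, stepApprox g N u ∂μ =
      ∑ j ∈ Finset.Ico (-(N : ℤ) ^ 2) (N ^ 2), g (j / N) * μ.real (gridCell N j) := by
  unfold stepApprox
  rw [integral_finsetSum _ fun j _ =>
    ((integrable_const 1).indicator (measurableSet_gridCell N j)).const_mul _]
  simp_rw [integral_const_mul, integral_indicator_one (measurableSet_gridCell N _)]

lemma LipschitzWith.integrable_of_integrable_id [IsFiniteMeasure μ] (hμ : Integrable id μ)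
    {K : ℝ≥0} {g : ℝ → ℝ} (hg : LipschitzWith K g) : Integrable g μ := by
  have hg₀ : LipschitzWith K fun u => g u - g 0 := by
    simpa using hg.sub (LipschitzWith.const (g 0))
  refine (((hg₀.comp_memLp (sub_self _) (memLp_one_iff_integrable.2 hμ)).integrable
    le_rfl).add (integrable_const (g 0))).congr (ae_of_all _ fun u => ?_)
  simp

lemma abs_integral_sub_integral_stepApprox_le [IsProbabilityMeasure μ] (hμ : Integrable id μ)
    {K : ℝ≥0} {g : ℝ → ℝ} (hg : LipschitzWith K g) (hg0 : g 0 = 0) (N : ℕ) :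
    |∫ u, g u ∂μ - ∫ u, stepApprox g N u ∂μ| ≤ K / N + K * ∫ u, tailAbs N u ∂μ := by
  have hgμ : Integrable g μ := hg.integrable_of_integrable_id hμ
  rw [← integral_sub hgμ (integrable_stepApprox g N)]
  calc |∫ u, g u - stepApprox g N u ∂μ| ≤ ∫ u, |g u - stepApprox g N u| ∂μ :=
        abs_integral_le_integral_abs
    _ ≤ ∫ u, (K / N + K * tailAbs N u) ∂μ :=
        integral_mono (hgμ.sub (integrable_stepApprox g N)).abs
          ((integrable_const _).add ((integrable_tailAbs hμ N).const_mul _))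
          (abs_sub_stepApprox_le hg hg0 N)
    _ = K / N + K * ∫ u, tailAbs N u ∂μ := by
        rw [integral_add (integrable_const _) ((integrable_tailAbs hμ N).const_mul _),
          integral_const, integral_const_mul, probReal_univ, one_smul]

lemma abs_integral_stepApprox_sub_le [IsFiniteMeasure μ] [IsFiniteMeasure ν] {K : ℝ≥0}
    {g : ℝ → ℝ} (hg : LipschitzWith K g) (hg0 : g 0 = 0) (N : ℕ) :
    |∫ u, stepApprox g N u ∂μ - ∫ u, stepApprox g N u ∂ν| ≤
      K * N * ∑ j ∈ Finset.Ico (-(N : ℤ) ^ 2) (N ^ 2),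
        |μ.real (gridCell N j) - ν.real (gridCell N j)| := by
  rw [integral_stepApprox, integral_stepApprox, ← Finset.sum_sub_distrib, Finset.mul_sum]
  refine (Finset.abs_sum_le_sum_abs _ _).trans (Finset.sum_le_sum fun j hj => ?_)
  rw [← mul_sub, abs_mul]
  gcongr
  calc |g (j / N)| ≤ K * |(j : ℝ) / N| := by
        simpa only [Real.dist_eq, hg0, sub_zero] using hg.dist_le_mul (j / N) 0
    _ ≤ K * N := by gcongr; exact abs_div_natCast_le_of_mem_Ico hj

lemma abs_integral_sub_integral_le [IsProbabilityMeasure μ] [IsProbabilityMeasure ν]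
    (hμ : Integrable id μ) (hν : Integrable id ν) {K : ℝ≥0} {g : ℝ → ℝ}
    (hg : LipschitzWith K g) (N : ℕ) :
    |∫ u, g u ∂μ - ∫ u, g u ∂ν| ≤ 2 * K / N + K * ∫ u, tailAbs N u ∂μ +
      K * ∫ u, tailAbs N u ∂ν + K * N * ∑ j ∈ Finset.Ico (-(N : ℤ) ^ 2) (N ^ 2),
        |μ.real (gridCell N j) - ν.real (gridCell N j)| := by
  set g₀ := fun u => g u - g 0
  have hg₀ : LipschitzWith K g₀ := by simpa using hg.sub (LipschitzWith.const (g 0))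
  have hg₀0 : g₀ 0 = 0 := sub_self _
  have hshift : ∀ ρ : Measure ℝ, [IsProbabilityMeasure ρ] → Integrable id ρ →
      ∫ u, g u ∂ρ = ∫ u, g₀ u ∂ρ + g 0 := fun ρ _ hρ => by
    simp [g₀, integral_sub (hg.integrable_of_integrable_id hρ) (integrable_const _)]
  have hμ_step := abs_integral_sub_integral_stepApprox_le hμ hg₀ hg₀0 N
  have hν_step := abs_integral_sub_integral_stepApprox_le hν hg₀ hg₀0 N
  have hμν_step := abs_integral_stepApprox_sub_le (μ := μ) (ν := ν) hg₀ hg₀0 N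
  rw [hshift μ hμ, hshift ν hν, add_sub_add_right_eq_sub]
  calc |∫ u, g₀ u ∂μ - ∫ u, g₀ u ∂ν|
      = |(∫ u, g₀ u ∂μ - ∫ u, stepApprox g₀ N u ∂μ) +
          (∫ u, stepApprox g₀ N u ∂μ - ∫ u, stepApprox g₀ N u ∂ν) +
          (∫ u, stepApprox g₀ N u ∂ν - ∫ u, g₀ u ∂ν)| := by congr 1; ring
    _ ≤ _ := by
      have h2K : 2 * (K : ℝ) / N = K / N + K / N := by ring
      rw [abs_sub_comm] at hν_step
      linarith [abs_add_three (∫ u, g₀ u ∂μ - ∫ u, stepApprox g₀ N u ∂μ)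
        (∫ u, stepApprox g₀ N u ∂μ - ∫ u, stepApprox g₀ N u ∂ν)
        (∫ u, stepApprox g₀ N u ∂ν - ∫ u, g₀ u ∂ν)]

end

lemma tendstoUniformly_of_dist_le_of_tendsto {ι α β : Type*} [PseudoMetricSpace β]
    {p : Filter ι} {F : ι → α → β} {G : α → β} {B : ℕ → ι → ℝ} {b : ℕ → ℝ}
    (hFG : ∀ N, ∀ᶠ i in p, ∀ x, dist (G x) (F i x) ≤ B N i)
    (hB : ∀ N, Tendsto (B N) p (𝓝 (b N))) (hb : Tendsto b atTop (𝓝 0)) :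
    TendstoUniformly F G p := by
  rw [Metric.tendstoUniformly_iff]
  intro ε hε
  obtain ⟨N, hN⟩ := (hb.eventually (gt_mem_nhds hε)).exists
  filter_upwards [hFG N, (hB N).eventually (gt_mem_nhds hN)] with i hi hBi x
  exact (hi x).trans_lt hBi

theorem tendstoUniformly_integral_comp_add {μ : ℕ → Measure ℝ} {ν : Measure ℝ}
    [IsProbabilityMeasure ν] (hν : Integrable id ν)
    (hμ : ∀ᶠ n in atTop, IsProbabilityMeasure (μ n) ∧ Integrable id (μ n))
    (hcell : ∀ N j, Tendsto (fun n => (μ n).real (gridCell N j)) atTop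
      (𝓝 (ν.real (gridCell N j))))
    (htail : ∀ N, Tendsto (fun n => ∫ u, tailAbs N u ∂μ n) atTop (𝓝 (∫ u, tailAbs N u ∂ν)))
    {K : ℝ≥0} {f : ℝ → ℝ} (hf : LipschitzWith K f) :
    TendstoUniformly (fun n x => ∫ u, f (x + u) ∂μ n) (fun x => ∫ u, f (x + u) ∂ν) atTop := by
  refine tendstoUniformly_of_dist_le_of_tendsto
    (B := fun N n => 2 * K / N + K * ∫ u, tailAbs N u ∂ν + K * ∫ u, tailAbs N u ∂μ n +
      K * N * ∑ j ∈ Finset.Ico (-(N : ℤ) ^ 2) (N ^ 2),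
        |ν.real (gridCell N j) - (μ n).real (gridCell N j)|)
    (b := fun N => 2 * K / N + 2 * K * ∫ u, tailAbs N u ∂ν) (fun N => ?_) (fun N => ?_) ?_
  · filter_upwards [hμ] with n ⟨_, hμn⟩ x
    have hfx : LipschitzWith K fun u => f (x + u) := by
      have := hf.comp (isometry_add_left x).lipschitz
      rwa [mul_one] at this
    rw [Real.dist_eq]
    exact abs_integral_sub_integral_le hν hμn hfx N
  · have hcells := tendsto_finsetSum (Finset.Ico (-(N : ℤ) ^ 2) (N ^ 2))
      fun j _ => ((tendsto_const_nhds (x := ν.real (gridCell N j))).sub (hcell N j)).abs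
    convert ((tendsto_const_nhds.add ((htail N).const_mul (K : ℝ))).add
      (hcells.const_mul (K * N : ℝ))) using 2
    simp only [sub_self, abs_zero, Finset.sum_const_zero, mul_zero, add_zero]
    ring
  · simpa using (tendsto_const_div_atTop_nhds_zero_nat (2 * K : ℝ)).add
      ((tendsto_integral_tailAbs hν).const_mul (2 * K : ℝ))

lemma ae_tendsto_integral_empiricalMeasure {Ω α : Type*} [MeasurableSpace Ω] [MeasurableSpace α]
    [MeasurableSingletonClass α] {P : Measure Ω} {ν : Measure α} {X : ℕ → Ω → α}
    (hX : ∀ i, Measurable (X i)) (hindep : iIndepFun X P) (hlaw : ∀ i, P.map (X i) = ν)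
    {h : α → ℝ} (hh : Measurable h) (hint : Integrable h ν) :
    ∀ᵐ ω ∂P, Tendsto (fun n => ∫ x, h x ∂empiricalMeasure (X · ω) n) atTop
      (𝓝 (∫ x, h x ∂ν)) := by
  have hident : ∀ i, IdentDistrib (h ∘ X i) (h ∘ X 0) P P := fun i =>
    IdentDistrib.comp ⟨(hX i).aemeasurable, (hX 0).aemeasurable, by rw [hlaw, hlaw]⟩ hh
  rw [← hlaw 0] at hint
  have hint0 : Integrable (h ∘ X 0) P :=
    (integrable_map_measure hh.aestronglyMeasurable (hX 0).aemeasurable).1 hint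
  have hmean : ∫ ω, h (X 0 ω) ∂P = ∫ x, h x ∂ν := by
    rw [← hlaw 0, integral_map (hX 0).aemeasurable hh.aestronglyMeasurable]
  filter_upwards [strong_law_ae _ hint0 (fun i j hij => (hindep.indepFun hij).comp hh hh) hident]
    with ω hω
  simpa [integral_empiricalMeasure, hmean] using hω

lemma ae_tendsto_measureReal_empiricalMeasure {Ω α : Type*} [MeasurableSpace Ω]
    [MeasurableSpace α] [MeasurableSingletonClass α] {P : Measure Ω} {ν : Measure α}
    [IsFiniteMeasure ν] {X : ℕ → Ω → α} (hX : ∀ i, Measurable (X i)) (hindep : iIndepFun X P)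
    (hlaw : ∀ i, P.map (X i) = ν) {s : Set α} (hs : MeasurableSet s) :
    ∀ᵐ ω ∂P, Tendsto (fun n => (empiricalMeasure (X · ω) n).real s) atTop (𝓝 (ν.real s)) := by
  simpa only [integral_indicator_one hs] using ae_tendsto_integral_empiricalMeasure hX hindep hlaw
    (measurable_one.indicator hs) ((integrable_const 1).indicator hs)

lemma gaussianPDFReal_eq_gaussianKernel {σ : ℝ} (hσ : 0 < σ) (u : ℝ) :
    gaussianPDFReal 0 (σ ^ 2).toNNReal u = gaussianKernel σ u := by
  rw [gaussianPDFReal, gaussianKernel, Real.coe_toNNReal _ (sq_nonneg σ), sub_zero,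
    Real.sqrt_mul (by positivity), Real.sqrt_sq hσ.le, mul_comm (Real.sqrt _)]

lemma integral_mul_gaussianKernel {σ : ℝ} (hσ : 0 < σ) (h : ℝ → ℝ) :
    ∫ u, h u * gaussianKernel σ u = ∫ u, h u ∂gaussianReal 0 (σ ^ 2).toNNReal := by
  rw [integral_gaussianReal_eq_integral_smul (by simpa using hσ.ne')]
  simp_rw [gaussianPDFReal_eq_gaussianKernel hσ, smul_eq_mul, mul_comm]

theorem randomized_smoothing_uniform_convergence_general
    {Ω : Type*} [MeasurableSpace Ω] (P : Measure Ω)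
    (L σ : ℝ) (hσ : 0 < σ)
    (f : ℝ → ℝ) (hf : ∀ x y, |f x - f y| ≤ L * |x - y|)
    (δ : ℕ → Ω → ℝ) (hmeas : ∀ i, Measurable (δ i))
    (hindep : iIndepFun δ P)
    (hgauss : ∀ i, Measure.map (δ i) P = gaussianReal 0 (Real.toNNReal (σ ^ 2))) :
    ∀ᵐ ω ∂P, TendstoUniformly
      (fun (n : ℕ) (x : ℝ) => (1 / (n : ℝ)) * ∑ i ∈ Finset.range n, f (x + δ i ω))
      (fun x => ∫ u, f (x + u) * gaussianKernel σ u) Filter.atTop := by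
  have hfL : LipschitzWith L.toNNReal f := LipschitzWith.of_dist_le_mul fun x y => by
    simpa only [Real.dist_eq] using (hf x y).trans (by gcongr; exact Real.le_coe_toNNReal L)
  have hγ : Integrable id (gaussianReal 0 (σ ^ 2).toNNReal) :=
    (memLp_id_gaussianReal 1).integrable le_rfl
  have hcell := ae_all_iff.2 fun N : ℕ => ae_all_iff.2 fun j : ℤ =>
    ae_tendsto_measureReal_empiricalMeasure hmeas hindep hgauss (measurableSet_gridCell N j)
  have htail := ae_all_iff.2 fun N => ae_tendsto_integral_empiricalMeasure hmeas hindep hgauss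
    (measurable_tailAbs N) (integrable_tailAbs hγ N)
  filter_upwards [hcell, htail] with ω hcellω htailω
  have hemp : ∀ᶠ n in atTop, IsProbabilityMeasure (empiricalMeasure (δ · ω) n) ∧
      Integrable id (empiricalMeasure (δ · ω) n) :=
    (eventually_ne_atTop 0).mono fun n hn =>
      ⟨isProbabilityMeasure_empiricalMeasure _ hn, integrable_empiricalMeasure _ _ _⟩
  simpa only [integral_mul_gaussianKernel hσ, integral_empiricalMeasure, one_div] using
    tendstoUniformly_integral_comp_add hγ hemp hcellω htailω hfL

/-- **Almost-sure uniform convergence of randomized smoothing to Gaussian convolution.**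
For `L`-Lipschitz `f` and i.i.d. `N(0,σ²)` noises `δ₁, δ₂, …`, almost surely the averages
`(1/n) Σ_{i<n} f(x + δᵢ)` converge uniformly in `x ∈ ℝ` to `∫ f(x+u) φ_σ(u) du`. -/
theorem randomized_smoothing_uniform_convergence
    {Ω : Type*} [MeasurableSpace Ω] (P : Measure Ω) [IsProbabilityMeasure P]
    (L σ : ℝ) (hL : 0 ≤ L) (hσ : 0 < σ)
    (f : ℝ → ℝ) (hf : ∀ x y, |f x - f y| ≤ L * |x - y|)
    (δ : ℕ → Ω → ℝ) (hmeas : ∀ i, Measurable (δ i))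
    (hindep : iIndepFun δ P)
    (hgauss : ∀ i, Measure.map (δ i) P = gaussianReal 0 (Real.toNNReal (σ ^ 2))) :
    ∀ᵐ ω ∂P, TendstoUniformly
      (fun (n : ℕ) (x : ℝ) => (1 / (n : ℝ)) * ∑ i ∈ Finset.range n, f (x + δ i ω))
      (fun x => ∫ u, f (x + u) * gaussianKernel σ u) Filter.atTop :=
  randomized_smoothing_uniform_convergence_general P L σ hσ f hf δ hmeas hindep hgauss
end

section
/- Let σ > 0 and let f : ℝ → ℝ be bounded and measurable. Then v(φ_σ * f) ≤ v(f): the Gaussian-kernel convolution does not increase the number of sign variations of f. -/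
/-- Number of sign changes in a list of reals (the list is assumed zero-free). -/
noncomputable def signChanges : List ℝ → ℕ
  | a :: b :: l => (if a * b < 0 then 1 else 0) + signChanges (b :: l)
  | _ => 0

open Classical in
/-- The number of sign variations of `g : ℝ → ℝ`: the supremum, over all finite increasing
sequences `x₁ < ⋯ < xₙ`, of the number of sign changes in `(g x₁, …, g xₙ)` after deleting
all zero entries. -/
noncomputable def signVar (g : ℝ → ℝ) : ℕ∞ :=
  ⨆ l : {l : List ℝ // l.Pairwise (· < ·)},
    (signChanges (((l : List ℝ).map g).filter fun a => decide (a ≠ 0)) : ℕ∞)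

/-!
Substituting `y = x - u` gives `(φ_σ * f)(x) = φ_σ(x) · L w (x / σ²)` with
`w y = exp (-y² / (2σ²)) f y` and `L w s = ∫ exp (s y) w y dy` the bilateral Laplace transform.
Positive factors and increasing changes of variable preserve sign changes, so it suffices that `L`
does not increase the number of sign changes, which is proved by induction on that number. Unless
`w` changes sign infinitely often towards `-∞`, let `t` be the point of its first sign change:
then `(y - t) w y` has one sign change fewer than `w`. The derivative of `exp (-t s) · L w s` is
`exp (-t s) · L ((· - t) w) s`, so by Rolle's theorem `L ((· - t) w)` loses at most one of the
sign changes of `L w`.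
-/
open MeasureTheory Real Set

def IsSignAlternating (g : ℝ → ℝ) {m : ℕ} (x : Fin (m + 1) → ℝ) : Prop :=
  StrictMono x ∧ ∀ i : Fin m, g (x i.castSucc) * g (x i.succ) < 0

def HasSignChanges (g : ℝ → ℝ) (m : ℕ) : Prop :=
  ∃ x : Fin (m + 1) → ℝ, IsSignAlternating g x

section SignChanges

variable {g : ℝ → ℝ} {m : ℕ}

theorem isSignAlternating_const (g : ℝ → ℝ) (a : ℝ) :
    IsSignAlternating g (fun _ : Fin 1 => a) :=
  ⟨fun i j hij => (hij.ne (Subsingleton.elim (α := Fin 1) i j)).elim, fun i => i.elim0⟩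

theorem hasSignChanges_zero (g : ℝ → ℝ) : HasSignChanges g 0 :=
  ⟨_, isSignAlternating_const g 0⟩

theorem IsSignAlternating.cons {x : Fin (m + 1) → ℝ} (hx : IsSignAlternating g x) {q : ℝ}
    (hq : q < x 0) (hgq : g q * g (x 0) < 0) :
    IsSignAlternating g (Fin.cons q x : Fin (m + 2) → ℝ) := by
  refine ⟨Fin.strictMono_cons.2 ⟨fun j => hq.trans_le (hx.1.monotone (Fin.zero_le j)), hx.1⟩,
    Fin.cases (by simpa using hgq) fun i => ?_⟩
  simpa [← Fin.succ_castSucc] using hx.2 i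

theorem IsSignAlternating.tail {x : Fin (m + 2) → ℝ} (hx : IsSignAlternating g x) :
    IsSignAlternating g (Fin.tail x) :=
  ⟨hx.1.comp Fin.strictMono_succ, fun i => by
    simpa only [Fin.tail, Fin.succ_castSucc] using hx.2 i.succ⟩

theorem IsSignAlternating.of_mul_pos {c : ℝ → ℝ} {x : Fin (m + 1) → ℝ}
    (hx : IsSignAlternating (fun y => c y * g y) x) (hc : ∀ i, 0 < c (x i)) :
    IsSignAlternating g x := by
  refine ⟨hx.1, fun i => neg_of_mul_neg_right (a := c (x i.castSucc) * c (x i.succ)) ?_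
    (mul_pos (hc _) (hc _)).le⟩
  linarith [hx.2 i]

theorem IsSignAlternating.apply_ne_zero {x : Fin (m + 2) → ℝ} (hx : IsSignAlternating g x)
    (j : Fin (m + 2)) : g (x j) ≠ 0 := by
  rcases Nat.lt_or_ge j (m + 1) with hj | hj
  · simpa using left_ne_zero_of_mul (hx.2 ⟨j, hj⟩).ne
  · obtain rfl : j = Fin.last (m + 1) := Fin.ext (by simp; omega)
    simpa using right_ne_zero_of_mul (hx.2 (Fin.last m)).ne

theorem HasSignChanges.of_mul_comp {h c φ : ℝ → ℝ} (hg : HasSignChanges g m)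
    (hφ : StrictMono φ) (hc : ∀ y, 0 < c y) (heq : ∀ y, g y = c y * h (φ y)) :
    HasSignChanges h m := by
  obtain rfl : g = fun y => c y * h (φ y) := funext heq
  obtain ⟨x, hx⟩ := hg
  have hx' : IsSignAlternating (fun y => h (φ y)) x := hx.of_mul_pos fun i => hc _
  exact ⟨φ ∘ x, hφ.comp hx'.1, hx'.2⟩

theorem hasSignChanges_neg_iff : HasSignChanges (fun y => -g y) m ↔ HasSignChanges g m := by
  simp only [HasSignChanges, IsSignAlternating, neg_mul_neg]

theorem HasSignChanges.exists_mul_neg (hg : HasSignChanges g (m + 1)) : ∃ a b, g a * g b < 0 :=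
  let ⟨_, hx⟩ := hg; ⟨_, _, hx.2 0⟩

theorem hasSignChanges_one_of_mul_neg {a b : ℝ} (h : g a * g b < 0) :
    HasSignChanges g 1 := by
  rcases lt_trichotomy a b with hab | rfl | hab
  · exact ⟨_, (isSignAlternating_const g b).cons hab h⟩
  · exact absurd h (mul_self_nonneg _).not_gt
  · exact ⟨_, (isSignAlternating_const g a).cons hab (mul_comm (g a) _ ▸ h)⟩

end SignChanges

section BothSignsBelow

variable {w : ℝ → ℝ} {x : ℝ}

def BothSignsBelow (w : ℝ → ℝ) (x : ℝ) : Prop :=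
  (∃ y < x, 0 < w y) ∧ ∃ y < x, w y < 0

theorem BothSignsBelow.mono {x' : ℝ} (h : BothSignsBelow w x) (hx : x ≤ x') :
    BothSignsBelow w x' :=
  ⟨h.1.imp fun _ hy => ⟨hy.1.trans_le hx, hy.2⟩,
    h.2.imp fun _ hy => ⟨hy.1.trans_le hx, hy.2⟩⟩

theorem BothSignsBelow.neg (h : BothSignsBelow w x) : BothSignsBelow (fun y => -w y) x :=
  ⟨h.2.imp fun _ hy => ⟨hy.1, neg_pos.2 hy.2⟩,
    h.1.imp fun _ hy => ⟨hy.1, neg_lt_zero.2 hy.2⟩⟩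

theorem BothSignsBelow.exists_lt (h : BothSignsBelow w x) : ∃ x' < x, BothSignsBelow w x' := by
  obtain ⟨⟨p, hp, hwp⟩, ⟨n, hn, hwn⟩⟩ := h
  obtain ⟨x', hx', hx'x⟩ := exists_between (max_lt hp hn)
  exact ⟨x', hx'x, ⟨p, (le_max_left p n).trans_lt hx', hwp⟩,
    ⟨n, (le_max_right p n).trans_lt hx', hwn⟩⟩

theorem BothSignsBelow.exists_mul_neg {b : ℝ} (h : BothSignsBelow w x) (hb : w b ≠ 0) :
    ∃ q < x, w q * w b < 0 := by
  obtain ⟨⟨p, hp, hwp⟩, ⟨n, hn, hwn⟩⟩ := h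
  rcases hb.lt_or_gt with hb | hb
  · exact ⟨p, hp, mul_neg_of_pos_of_neg hwp hb⟩
  · exact ⟨n, hn, mul_neg_of_neg_of_pos hwn hb⟩

theorem hasSignChanges_of_forall_bothSignsBelow (h : ∀ x, BothSignsBelow w x) (m : ℕ) :
    HasSignChanges w m := by
  suffices ∃ x : Fin (m + 1) → ℝ, IsSignAlternating w x ∧ w (x 0) ≠ 0 from
    this.imp fun _ hx => hx.1
  induction m with
  | zero =>
    obtain ⟨y, -, hy⟩ := (h 0).1
    exact ⟨_, isSignAlternating_const w y, hy.ne'⟩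
  | succ m ih =>
    obtain ⟨x, hx, hx0⟩ := ih
    obtain ⟨q, hq, hqx⟩ := (h (x 0)).exists_mul_neg hx0
    exact ⟨_, hx.cons hq hqx, by simpa using left_ne_zero_of_mul hqx.ne⟩

theorem exists_signThreshold (hne : ∃ x, BothSignsBelow w x)
    (hbdd : ∃ x, ¬BothSignsBelow w x) :
    ∃ t, ((∀ y < t, 0 ≤ w y) ∨ ∀ y < t, w y ≤ 0) ∧ ∀ x, t < x → BothSignsBelow w x := by
  obtain ⟨x₀, hx₀⟩ := hbdd
  have hB : BddBelow {x | BothSignsBelow w x} :=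
    ⟨x₀, fun x hx => le_of_not_gt fun hlt => hx₀ (hx.mono hlt.le)⟩
  refine ⟨sInf {x | BothSignsBelow w x}, ?_, fun x hx => ?_⟩
  · have ht : ¬BothSignsBelow w (sInf {x | BothSignsBelow w x}) := fun ht =>
      let ⟨_, hlt, hx'⟩ := ht.exists_lt
      (csInf_le hB hx').not_gt hlt
    rw [BothSignsBelow, not_and_or] at ht
    push Not at ht
    exact ht.symm
  · obtain ⟨b, hb, hbx⟩ := exists_lt_of_csInf_lt hne hx
    exact BothSignsBelow.mono hb hbx.le

end BothSignsBelow

section Threshold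

variable {w : ℝ → ℝ} {t : ℝ} {n : ℕ}

theorem hasSignChanges_succ_of_mul_sub_of_nonneg (hnonneg : ∀ y < t, 0 ≤ w y)
    (hboth : ∀ x, t < x → BothSignsBelow w x) (h : HasSignChanges (fun y => (y - t) * w y) n) :
    HasSignChanges w (n + 1) := by
  obtain ⟨x, hx⟩ := h
  rcases n with _ | k
  · obtain ⟨⟨p, -, hp⟩, ⟨q, -, hq⟩⟩ := hboth (t + 1) (lt_add_one t)
    exact hasSignChanges_one_of_mul_neg (mul_neg_of_pos_of_neg hp hq)
  have hW : ∀ y ≤ t, (y - t) * w y ≤ 0 := fun y hy => by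
    rcases hy.lt_or_eq with hy | rfl
    · exact mul_nonpos_of_nonpos_of_nonneg (sub_nonpos.2 hy.le) (hnonneg y hy)
    · simp
  have htail : ∀ i : Fin (k + 1), t < x i.succ := fun i => by
    by_contra! hle
    have h1 := hW _ hle
    have h2 := hW _ ((hx.1 Fin.castSucc_lt_succ).le.trans hle)
    exact (hx.2 i).not_ge (mul_nonneg_of_nonpos_of_nonpos h2 h1)
  have hwtail : IsSignAlternating w (Fin.tail x) :=
    hx.tail.of_mul_pos fun i => sub_pos.2 (htail i)
  rcases lt_or_ge t (x 0) with h0 | h0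
  · have hwx : IsSignAlternating w x :=
      hx.of_mul_pos fun j => sub_pos.2 (h0.trans_le (hx.1.monotone (Fin.zero_le j)))
    obtain ⟨q, hq, hqx⟩ := (hboth _ h0).exists_mul_neg (hwx.apply_ne_zero 0)
    exact ⟨_, hwx.cons hq hqx⟩
  · -- `x 0` is the only point at or below `t`; a negative value of `w` in `[t, x 1)` is inserted
    have hW0 : (x 0 - t) * w (x 0) < 0 := (hW _ h0).lt_of_ne (hx.apply_ne_zero 0)
    have hx0 : x 0 < t := h0.lt_of_ne fun h => by simp [h] at hW0
    have hwx0 : 0 < w (x 0) := pos_of_mul_neg_right hW0 (sub_nonpos.2 h0)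
    have hW1 : 0 < (x (Fin.succ 0) - t) * w (x (Fin.succ 0)) :=
      pos_of_mul_neg_right (by simpa using hx.2 0) hW0.le
    have hwx1 : 0 < w (x (Fin.succ 0)) := pos_of_mul_pos_right hW1 (sub_pos.2 (htail 0)).le
    obtain ⟨q, hq, hqx⟩ := (hboth _ (htail 0)).exists_mul_neg hwx1.ne'
    have hwq : w q < 0 := neg_of_mul_neg_left hqx hwx1.le
    have htq : t ≤ q := le_of_not_gt fun hqt => (hnonneg q hqt).not_gt hwq
    exact ⟨_, (hwtail.cons hq hqx).cons (hx0.trans_le htq) (mul_neg_of_pos_of_neg hwx0 hwq)⟩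

theorem hasSignChanges_succ_of_mul_sub (hsign : (∀ y < t, 0 ≤ w y) ∨ ∀ y < t, w y ≤ 0)
    (hboth : ∀ x, t < x → BothSignsBelow w x) (h : HasSignChanges (fun y => (y - t) * w y) n) :
    HasSignChanges w (n + 1) := by
  rcases hsign with hnonneg | hnonpos
  · exact hasSignChanges_succ_of_mul_sub_of_nonneg hnonneg hboth h
  · refine hasSignChanges_neg_iff.1 (hasSignChanges_succ_of_mul_sub_of_nonneg
      (fun y hy => neg_nonneg.2 (hnonpos y hy)) (fun x hx => (hboth x hx).neg) ?_)
    simpa only [mul_neg] using hasSignChanges_neg_iff.2 h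

end Threshold

section SignVar

variable {f g : ℝ → ℝ} {m : ℕ}

theorem signChanges_ofFn (y : Fin (m + 1) → ℝ)
    (hy : ∀ i : Fin m, y i.castSucc * y i.succ < 0) : signChanges (List.ofFn y) = m := by
  induction m with
  | zero => simp [signChanges]
  | succ m ih =>
    have h0 : y 0 * y (Fin.succ 0) < 0 := by simpa using hy 0
    rw [List.ofFn_succ, List.ofFn_succ, signChanges, if_pos h0,
      ← List.ofFn_succ (f := fun i => y i.succ), ih _ fun i => hy i.succ, add_comm]

theorem HasSignChanges.le_signVar (h : HasSignChanges g m) : (m : ℕ∞) ≤ signVar g := by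
  obtain ⟨x, hx⟩ := h
  cases m with
  | zero => simp
  | succ m =>
    have hfilter :
        ((List.ofFn x).map g).filter (fun a => decide (a ≠ 0)) = List.ofFn (g ∘ x) := by
      rw [List.map_ofFn, List.filter_eq_self]
      simp [List.mem_ofFn, hx.apply_ne_zero]
    unfold signVar
    refine le_iSup_of_le ⟨List.ofFn x, List.pairwise_ofFn.2 fun i j hij => hx.1 hij⟩ ?_
    rw [hfilter, signChanges_ofFn (g ∘ x) hx.2]

theorem hasSignChanges_of_isChain {l : List ℝ} (hl : l.Pairwise (· < ·))
    (hlen : l.length = m + 1) (hchain : l.IsChain fun p q => g p * g q < 0) : HasSignChanges g m :=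
  ⟨fun i => l[i.val], fun i j hij => List.pairwise_iff_getElem.1 hl _ _ _ _ hij,
    fun i => List.isChain_iff_getElem.1 hchain i (by omega)⟩

theorem exists_isChain_sublist (a : ℝ) (r : List ℝ) (hr : ∀ x ∈ a :: r, x ≠ 0) :
    ∃ s, s.Sublist r ∧ (a :: s).IsChain (fun p q => p * q < 0) ∧
      s.length = signChanges (a :: r) := by
  induction r generalizing a with
  | nil => exact ⟨[], List.Sublist.refl _, List.isChain_singleton a, rfl⟩
  | cons b r ih =>
    obtain ⟨s, hsr, hchain, hlen⟩ := ih b fun x hx => hr x (List.mem_cons_of_mem a hx)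
    by_cases hab : a * b < 0
    · refine ⟨b :: s, hsr.cons_cons b, List.isChain_cons_cons.2 ⟨hab, hchain⟩, ?_⟩
      simp [signChanges, hab, hlen, add_comm]
    · -- `a` and `b` have the same sign, so `a` can replace `b` as the head of the chain
      have hab' : 0 < a * b := (not_lt.1 hab).lt_of_ne'
        (mul_ne_zero (hr a (by simp)) (hr b (by simp)))
      refine ⟨s, hsr.cons b, ?_, by simp [signChanges, hab, hlen]⟩
      rcases s with _ | ⟨c, s⟩
      · exact List.isChain_singleton a
      · obtain ⟨hbc, hs⟩ := List.isChain_cons_cons.1 hchain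
        refine List.isChain_cons_cons.2 ⟨?_, hs⟩
        nlinarith [mul_neg_of_pos_of_neg hab' hbc, sq_nonneg b]

theorem hasSignChanges_signChanges {l : List ℝ} (hl : l.Pairwise (· < ·)) :
    HasSignChanges g (signChanges ((l.map g).filter fun a => decide (a ≠ 0))) := by
  rcases hr : (l.map g).filter (fun a => decide (a ≠ 0)) with _ | ⟨a, r⟩
  · exact hasSignChanges_zero g
  have hne : ∀ x ∈ a :: r, x ≠ 0 := by
    rw [← hr]
    exact fun x hx => by simpa using (List.mem_filter.1 hx).2
  obtain ⟨s, hsr, hchain, hlen⟩ := exists_isChain_sublist a r hne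
  obtain ⟨l₀, hl₀, hmap⟩ :=
    List.sublist_map_iff.1 ((hsr.cons_cons a).trans (hr ▸ List.filter_sublist))
  refine hasSignChanges_of_isChain (hl.sublist hl₀) ?_ ((List.isChain_map g).1 (hmap ▸ hchain))
  rw [← List.length_map (f := g), ← hmap, List.length_cons, hlen]

theorem signVar_le_signVar (h : ∀ m, HasSignChanges g m → HasSignChanges f m) :
    signVar g ≤ signVar f :=
  iSup_le fun l => (h _ (hasSignChanges_signChanges l.2)).le_signVar

end SignVar

theorem HasSignChanges.of_hasDerivAt {M D : ℝ → ℝ} {m : ℕ}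
    (hd : ∀ x, HasDerivAt M (D x) x) (h : HasSignChanges M (m + 1)) : HasSignChanges D m := by
  obtain ⟨x, hmono, halt⟩ := h
  have hmvt : ∀ i : Fin (m + 1),
      ∃ ξ ∈ Ioo (x i.castSucc) (x i.succ), 0 < D ξ * M (x i.succ) := fun i => by
    have hlt := hmono (Fin.castSucc_lt_succ (i := i))
    obtain ⟨ξ, hξ, hslope⟩ := exists_hasDerivAt_eq_slope M D hlt
      (fun y _ => (hd y).continuousAt.continuousWithinAt) fun y _ => hd y
    refine ⟨ξ, hξ, ?_⟩
    rw [hslope, div_mul_eq_mul_div]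
    exact div_pos (by nlinarith [halt i, sq_nonneg (M (x i.succ))]) (sub_pos.2 hlt)
  choose ξ hξ hD using hmvt
  refine ⟨ξ, Fin.strictMono_iff_lt_succ.2 fun i => ?_, fun i => ?_⟩
  · calc ξ i.castSucc < x i.castSucc.succ := (hξ _).2
      _ = x i.succ.castSucc := by rw [Fin.succ_castSucc]
      _ < ξ i.succ := (hξ _).1
  · have h1 := hD i.castSucc
    rw [Fin.succ_castSucc] at h1
    nlinarith [mul_pos h1 (hD i.succ), halt i.succ]

noncomputable def bilateralLaplace (w : ℝ → ℝ) (x : ℝ) : ℝ :=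
  ∫ y, exp (x * y) * w y

def BilateralLaplaceIntegrable (w : ℝ → ℝ) : Prop :=
  ∀ x, Integrable fun y => exp (x * y) * w y

section BilateralLaplace

variable {w : ℝ → ℝ} {m : ℕ}

theorem abs_mul_exp_mul_le {s x : ℝ} (hs : |s - x| ≤ 1) (y : ℝ) :
    |y| * exp (s * y) ≤ exp ((x + 2) * y) + exp ((x - 2) * y) := by
  have hy : |y| ≤ exp |y| := by linarith [add_one_le_exp |y|]
  have hsy : s * y ≤ x * y + |y| := by
    have : (s - x) * y ≤ |y| :=
      (le_abs_self _).trans ((abs_mul _ _).trans_le (mul_le_of_le_one_left (abs_nonneg y) hs))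
    linarith
  calc |y| * exp (s * y) ≤ exp |y| * exp (x * y + |y|) :=
        mul_le_mul hy (exp_le_exp.2 hsy) (exp_pos _).le (exp_pos _).le
    _ = exp (x * y + 2 * |y|) := by rw [← exp_add]; ring_nf
    _ ≤ exp ((x + 2) * y) + exp ((x - 2) * y) := by
      rcases abs_cases y with ⟨hy, -⟩ | ⟨hy, -⟩ <;> rw [hy]
      · rw [show x * y + 2 * y = (x + 2) * y by ring]
        linarith [exp_pos ((x - 2) * y)]
      · rw [show x * y + 2 * -y = (x - 2) * y by ring]
        linarith [exp_pos ((x + 2) * y)]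

theorem norm_exp_mul_mul_le {s x : ℝ} (hs : |s - x| ≤ 1) (y : ℝ) :
    ‖exp (s * y) * (y * w y)‖ ≤
      ‖exp ((x + 2) * y) * w y‖ + ‖exp ((x - 2) * y) * w y‖ := by
  simp only [norm_mul, Real.norm_eq_abs, abs_of_pos (exp_pos _)]
  nlinarith [abs_mul_exp_mul_le hs y, abs_nonneg (w y)]

theorem BilateralLaplaceIntegrable.mul_id (hw : BilateralLaplaceIntegrable w) :
    BilateralLaplaceIntegrable fun y => y * w y := fun x => by
  refine ((hw (x + 2)).norm.add (hw (x - 2)).norm).mono' ?_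
    (ae_of_all _ (norm_exp_mul_mul_le (by simp)))
  have : (fun y => exp (x * y) * (y * w y)) = fun y => y * (exp (x * y) * w y) := by
    ext y; ring
  exact this ▸ continuous_id.aestronglyMeasurable.mul (hw x).aestronglyMeasurable

theorem BilateralLaplaceIntegrable.mul_sub (hw : BilateralLaplaceIntegrable w) (t : ℝ) :
    BilateralLaplaceIntegrable fun y => (y - t) * w y := fun x =>
  ((hw.mul_id x).sub ((hw x).const_mul t)).congr (ae_of_all _ fun y => by
    simp only [Pi.sub_apply]
    ring)

theorem hasDerivAt_bilateralLaplace (hw : BilateralLaplaceIntegrable w) (x : ℝ) :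
    HasDerivAt (bilateralLaplace w) (bilateralLaplace (fun y => y * w y) x) x := by
  have hF : ∀ y s, HasDerivAt (fun s => exp (s * y) * w y) (exp (s * y) * (y * w y)) s :=
    fun y s => ((hasDerivAt_mul_const y).exp.mul_const (w y)).congr_deriv (by ring)
  refine (hasDerivAt_integral_of_dominated_loc_of_deriv_le (Metric.ball_mem_nhds x one_pos)
    (Filter.Eventually.of_forall fun s => (hw s).aestronglyMeasurable) (hw x)
    (F' := fun s y => exp (s * y) * (y * w y)) (hw.mul_id x).aestronglyMeasurable
    (ae_of_all _ fun y s hs => norm_exp_mul_mul_le ?_ y)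
    ((hw (x + 2)).norm.add (hw (x - 2)).norm) (ae_of_all _ fun y s _ => hF y s)).2
  simpa [← Real.dist_eq] using (Metric.mem_ball.1 hs).le

theorem bilateralLaplace_mul_sub (hw : BilateralLaplaceIntegrable w) (t x : ℝ) :
    bilateralLaplace (fun y => (y - t) * w y) x =
      bilateralLaplace (fun y => y * w y) x - t * bilateralLaplace w x := by
  rw [bilateralLaplace, bilateralLaplace, bilateralLaplace, ← integral_const_mul,
    ← integral_sub (hw.mul_id x) ((hw x).const_mul t)]
  congr 1 with y
  ring

theorem hasDerivAt_exp_mul_bilateralLaplace (hw : BilateralLaplaceIntegrable w) (t x : ℝ) :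
    HasDerivAt (fun x => exp (-(t * x)) * bilateralLaplace w x)
      (exp (-(t * x)) * bilateralLaplace (fun y => (y - t) * w y) x) x := by
  have hexp : HasDerivAt (fun x => exp (-(t * x))) (exp (-(t * x)) * -t) x := by
    simpa using ((hasDerivAt_id x).const_mul t).neg.exp
  refine (hexp.mul (hasDerivAt_bilateralLaplace hw x)).congr_deriv ?_
  rw [bilateralLaplace_mul_sub hw]
  ring

theorem HasSignChanges.bilateralLaplace_mul_sub (hw : BilateralLaplaceIntegrable w) (t : ℝ)
    (h : HasSignChanges (bilateralLaplace w) (m + 1)) :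
    HasSignChanges (bilateralLaplace fun y => (y - t) * w y) m := by
  have hM : HasSignChanges (fun x => exp (-(t * x)) * bilateralLaplace w x) (m + 1) :=
    h.of_mul_comp strictMono_id (fun x => exp_pos (t * x)) fun x => by
      rw [id, ← mul_assoc, ← exp_add, add_neg_cancel, exp_zero, one_mul]
  exact (hM.of_hasDerivAt (hasDerivAt_exp_mul_bilateralLaplace hw t)).of_mul_comp strictMono_id
    (fun x => exp_pos _) fun x => rfl

theorem HasSignChanges.exists_bothSignsBelow_of_bilateralLaplace
    (h : HasSignChanges (bilateralLaplace w) (m + 1)) : ∃ x, BothSignsBelow w x := by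
  have hpos : ∀ x, 0 < bilateralLaplace w x → ∃ y, 0 < w y := fun x hx => by
    by_contra! hw
    exact hx.not_ge (integral_nonpos fun y => mul_nonpos_of_nonneg_of_nonpos (exp_pos _).le (hw y))
  have hneg : ∀ x, bilateralLaplace w x < 0 → ∃ y, w y < 0 := fun x hx => by
    by_contra! hw
    exact hx.not_ge (integral_nonneg fun y => mul_nonneg (exp_pos _).le (hw y))
  obtain ⟨⟨p, hp⟩, ⟨q, hq⟩⟩ : (∃ y, 0 < w y) ∧ ∃ y, w y < 0 := by
    obtain ⟨a, b, hab⟩ := h.exists_mul_neg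
    rcases mul_neg_iff.1 hab with ⟨ha, hb⟩ | ⟨ha, hb⟩
    exacts [⟨hpos _ ha, hneg _ hb⟩, ⟨hpos _ hb, hneg _ ha⟩]
  exact ⟨max p q + 1, ⟨p, by linarith [le_max_left p q], hp⟩,
    ⟨q, by linarith [le_max_right p q], hq⟩⟩

theorem HasSignChanges.of_bilateralLaplace (hw : BilateralLaplaceIntegrable w)
    (h : HasSignChanges (bilateralLaplace w) m) : HasSignChanges w m := by
  induction m generalizing w with
  | zero => exact hasSignChanges_zero w
  | succ n ih =>
    by_cases hinf : ∀ x, BothSignsBelow w x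
    · exact hasSignChanges_of_forall_bothSignsBelow hinf _
    push Not at hinf
    obtain ⟨t, hsign, hboth⟩ :=
      exists_signThreshold h.exists_bothSignsBelow_of_bilateralLaplace hinf
    exact hasSignChanges_succ_of_mul_sub hsign hboth
      (ih (hw.mul_sub t) (h.bilateralLaplace_mul_sub hw t))

end BilateralLaplace

section Gaussian

variable {σ : ℝ}

theorem gaussianKernel_pos (hσ : 0 < σ) (u : ℝ) : 0 < gaussianKernel σ u := by
  unfold gaussianKernel
  have : 0 < √(2 * π) := sqrt_pos.2 (by positivity)
  positivity

theorem integral_gaussianKernel_mul_sub (hσ : σ ≠ 0) (f : ℝ → ℝ) (x : ℝ) :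
    ∫ u, gaussianKernel σ u * f (x - u) =
      gaussianKernel σ x *
        bilateralLaplace (fun y => exp (-(y ^ 2) / (2 * σ ^ 2)) * f y) (x / σ ^ 2) := by
  have hshift := integral_sub_left_eq_self (fun y => gaussianKernel σ (x - y) * f y) volume x
  simp only [sub_sub_cancel] at hshift
  rw [hshift, bilateralLaplace, ← integral_const_mul]
  congr 1 with y
  have hexp : exp (-((x - y) ^ 2) / (2 * σ ^ 2)) = exp (-(x ^ 2) / (2 * σ ^ 2)) *
      (exp (x / σ ^ 2 * y) * exp (-(y ^ 2) / (2 * σ ^ 2))) := by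
    rw [← exp_add, ← exp_add]
    congr 1
    field_simp
    ring
  simp only [gaussianKernel, hexp]
  ring

theorem bilateralLaplaceIntegrable_exp_neg_sq_mul (hσ : σ ≠ 0) {f : ℝ → ℝ} {C : ℝ}
    (hf : Measurable f) (hC : ∀ y, |f y| ≤ C) :
    BilateralLaplaceIntegrable fun y => exp (-(y ^ 2) / (2 * σ ^ 2)) * f y := fun x => by
  -- completing the square in the exponent
  have hsq : ∀ y, exp (x * y) * exp (-(y ^ 2) / (2 * σ ^ 2)) =
      exp (σ ^ 2 * x ^ 2 / 2) * exp (-(1 / (2 * σ ^ 2)) * (y - σ ^ 2 * x) ^ 2) := fun y => by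
    rw [← exp_add, ← exp_add]
    congr 1
    field_simp
    ring
  have hb : 0 < 1 / (2 * σ ^ 2) := one_div_pos.2 (mul_pos two_pos (by positivity))
  refine Integrable.mono' (((integrable_exp_neg_mul_sq hb).comp_sub_right (σ ^ 2 * x)).const_mul
    (C * exp (σ ^ 2 * x ^ 2 / 2))) (by fun_prop : Measurable _).aestronglyMeasurable
    (ae_of_all _ fun y => ?_)
  calc ‖exp (x * y) * (exp (-(y ^ 2) / (2 * σ ^ 2)) * f y)‖
      = exp (x * y) * exp (-(y ^ 2) / (2 * σ ^ 2)) * |f y| := by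
        simp only [norm_mul, Real.norm_eq_abs, abs_of_pos (exp_pos _), mul_assoc]
    _ ≤ exp (x * y) * exp (-(y ^ 2) / (2 * σ ^ 2)) * C := by gcongr; exact hC y
    _ = _ := by rw [hsq]; ring

end Gaussian

/-- **Variation-diminishing property of the Gaussian kernel.** For bounded measurable `f`,
Gaussian-kernel convolution does not increase the number of sign variations. -/
theorem gaussian_variation_diminishing
    (σ : ℝ) (hσ : 0 < σ) (f : ℝ → ℝ)
    (hbd : ∃ C, ∀ x, |f x| ≤ C) (hmeas : Measurable f) :
    signVar (fun x => ∫ u, gaussianKernel σ u * f (x - u)) ≤ signVar f := by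
  obtain ⟨C, hC⟩ := hbd
  refine signVar_le_signVar fun m hm => ?_
  have hL := hm.of_mul_comp (strictMono_id.div_const (pow_pos hσ 2)) (gaussianKernel_pos hσ)
    (integral_gaussianKernel_mul_sub hσ.ne' f)
  have hw := hL.of_bilateralLaplace (bilateralLaplaceIntegrable_exp_neg_sq_mul hσ.ne' hmeas hC)
  exact hw.of_mul_comp strictMono_id (fun y => exp_pos _) fun y => rfl
end

section
/- Let f : ℝ → ℝ be continuous, let t ∈ ℝ, and suppose there is R > 0 such that f(x) < t for all x with |x| ≥ R. Assume every connected component of the superlevel set S = {x : f(x) ≥ t} contains a point where f > t, and that v(f − t) =: v is finite. Then the number of connected components of S is finite and is at most ⌊(v + 1)/2⌋. -/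
/-!
Pick in every component of `S = {f ≥ t}` a point where `f > t`. Two such points `a < b` in
different components cannot have `[a, b] ⊆ S`, since `[a, b]` is connected, so `f < t` somewhere
between them; and `f < t` at `±R`, beyond all of them. Listing `k` representatives in increasing
order and interleaving these points gives a sequence on which `f - t` alternates in sign `2k`
times, so `2k ≤ v`.
-/

open Finset

theorem signChanges_eq_length_sub_one_of_isChain :
    ∀ {l : List ℝ}, l.IsChain (· * · < 0) → signChanges l = l.length - 1
  | [], _ => by simp [signChanges]
  | [_], _ => by simp [signChanges]
  | a :: b :: l, h => by
    rw [List.isChain_cons_cons] at h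
    rw [signChanges, if_pos h.1, signChanges_eq_length_sub_one_of_isChain h.2]
    simp only [List.length_cons]
    omega

theorem length_sub_one_le_signVar {g : ℝ → ℝ} {xs : List ℝ} (hsorted : xs.Pairwise (· < ·))
    (hne : ∀ x ∈ xs, g x ≠ 0) (halt : (xs.map g).IsChain (· * · < 0)) :
    ((xs.length - 1 : ℕ) : ℕ∞) ≤ signVar g := by
  classical
  have hfilter : (xs.map g).filter (fun a => decide (a ≠ 0)) = xs.map g := by
    rw [List.filter_eq_self]
    simpa using hne
  refine le_iSup_of_le (⟨xs, hsorted⟩ : {l : List ℝ // l.Pairwise (· < ·)}) ?_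
  simp only [hfilter, signChanges_eq_length_sub_one_of_isChain halt, List.length_map, le_refl]

-- The list built is `z, y₁, c₁, y₂, c₂, …, yₖ, w`, with `cᵢ` a gap point between `yᵢ` and `yᵢ₊₁`.
theorem exists_isChain_alternating_of_gaps {α : Type*} [LinearOrder α] {g : α → ℝ} {w : α}
    (hw : g w < 0) :
    ∀ {ys : List α} {z : α}, (∀ y ∈ ys, 0 < g y) →
      ys.IsChain (fun a b => ∃ c, a < c ∧ c < b ∧ g c < 0) →
      (∀ y ∈ ys.head?, z < y) → (∀ y ∈ ys, y < w) → g z < 0 →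
      ∃ xs : List α, (z :: xs).IsChain (fun a b => a < b ∧ g a * g b < 0) ∧
        (∀ x ∈ z :: xs, g x ≠ 0) ∧ xs.length = 2 * ys.length
  | [], z, _, _, _, _, hz => ⟨[], by simp, by simpa using hz.ne, rfl⟩
  | y :: ys, z, hpos, hgap, hzy, hyw, hz => by
    have hy : 0 < g y := hpos y List.mem_cons_self
    obtain ⟨z', hyz', hz'ys, hz'⟩ :
        ∃ z', y < z' ∧ (∀ y' ∈ ys.head?, z' < y') ∧ g z' < 0 := by
      cases ys with
      | nil => exact ⟨w, hyw y List.mem_cons_self, by simp, hw⟩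
      | cons y' ys =>
        obtain ⟨c, hyc, hcy', hc⟩ := (List.isChain_cons_cons.1 hgap).1
        exact ⟨c, hyc, by simpa using hcy', hc⟩
    obtain ⟨xs, hchain, hne, hlen⟩ := exists_isChain_alternating_of_gaps hw
      (fun y hy => hpos y (List.mem_cons_of_mem _ hy)) hgap.tail hz'ys
      (fun y hy => hyw y (List.mem_cons_of_mem _ hy)) hz'
    refine ⟨y :: z' :: xs, ?_, ?_, by simp only [List.length_cons, hlen]; ring⟩
    · refine List.isChain_cons_cons.2 ⟨⟨by simpa using hzy, by nlinarith⟩,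
        List.isChain_cons_cons.2 ⟨⟨hyz', by nlinarith⟩, hchain⟩⟩
    · simp only [List.mem_cons, forall_eq_or_imp] at hne ⊢
      exact ⟨hz.ne, hy.ne', hne⟩

theorem two_mul_card_le_signVar {f : ℝ → ℝ} {t R : ℝ} (hout : ∀ x : ℝ, R ≤ |x| → f x < t)
    (s : Finset ℝ) (hpos : ∀ y ∈ s, t < f y)
    (hgap : ∀ a ∈ s, ∀ b ∈ s, a < b → ∃ c ∈ Set.Ioo a b, f c < t) :
    (2 * #s : ℕ∞) ≤ signVar (fun x => f x - t) := by
  have hbound : ∀ y ∈ s, -R < y ∧ y < R := fun y hy =>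
    abs_lt.1 (not_le.1 fun h => (hout y h).not_gt (hpos y hy))
  have hsorted : (s.sort).Pairwise (· < ·) := (sortedLT_sort s).pairwise
  have hgaps : (s.sort).IsChain (fun a b => ∃ c, a < c ∧ c < b ∧ f c - t < 0) := by
    refine List.Pairwise.isChain (hsorted.imp_of_mem fun {a b} ha hb hab => ?_)
    obtain ⟨c, ⟨hac, hcb⟩, hc⟩ := hgap a ((mem_sort _).1 ha) b ((mem_sort _).1 hb) hab
    exact ⟨c, hac, hcb, sub_neg.2 hc⟩
  obtain ⟨xs, hchain, hne, hlen⟩ :=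
    exists_isChain_alternating_of_gaps (g := fun x => f x - t) (w := R)
      (sub_neg.2 (hout R (le_abs_self R))) (fun y hy => sub_pos.2 (hpos y ((mem_sort _).1 hy)))
      hgaps (fun y hy => (hbound y ((mem_sort _).1 (List.mem_of_mem_head? hy))).1)
      (fun y hy => (hbound y ((mem_sort _).1 hy)).2)
      (sub_neg.2 (hout (-R) (by rw [abs_neg]; exact le_abs_self R)))
  have key := length_sub_one_le_signVar
    (List.isChain_iff_pairwise.1 (hchain.imp fun _ _ h => h.1)) hne
    (List.isChain_map _ |>.2 (hchain.imp fun _ _ h => h.2))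
  simpa [hlen] using key

theorem finite_and_natCard_le_of_forall_card_le {α : Type*} {n : ℕ}
    (h : ∀ s : Finset α, #s ≤ n) : Finite α ∧ Nat.card α ≤ n := by
  have hfin : Finite α := by
    by_contra hinf
    rw [not_finite_iff_infinite] at hinf
    obtain ⟨s, hs⟩ := Infinite.exists_subset_card_eq α (n + 1)
    have := h s
    omega
  have := Fintype.ofFinite α
  exact ⟨hfin, Nat.card_eq_fintype_card (α := α) ▸ h univ⟩

theorem ConnectedComponents.coe_eq_coe_iff_mem_connectedComponentIn {α : Type*}
    [TopologicalSpace α] {F : Set α} {x y : F} :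
    (x : ConnectedComponents F) = y ↔ (x : α) ∈ connectedComponentIn F y := by
  rw [coe_eq_coe', connectedComponentIn_eq_image y.2, Subtype.val_injective.mem_set_image]

theorem exists_mem_Ioo_notMem_of_notMem_connectedComponentIn {α : Type*}
    [ConditionallyCompleteLinearOrder α] [TopologicalSpace α] [OrderTopology α] [DenselyOrdered α]
    {S : Set α} {a b : α}
    (ha : a ∈ S) (hb : b ∈ S) (hab : a ≤ b) (hcomp : b ∉ connectedComponentIn S a) :
    ∃ c ∈ Set.Ioo a b, c ∉ S := by
  by_contra! h
  have hsub : Set.Icc a b ⊆ S := fun x hx => by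
    rcases hx.1.eq_or_lt with rfl | hax
    · exact ha
    rcases hx.2.eq_or_lt with rfl | hxb
    · exact hb
    exact h x ⟨hax, hxb⟩
  exact hcomp (isPreconnected_Icc.subset_connectedComponentIn (Set.left_mem_Icc.2 hab) hsub
    (Set.right_mem_Icc.2 hab))

theorem component_count_le_sign_variations_general
    (f : ℝ → ℝ) (t : ℝ) (R : ℝ)
    (hout : ∀ x : ℝ, R ≤ |x| → f x < t)
    (hcomp : ∀ x ∈ {x : ℝ | t ≤ f x},
      ∃ y ∈ connectedComponentIn {x : ℝ | t ≤ f x} x, t < f y)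
    (v : ℕ) (hv : signVar (fun x => f x - t) = (v : ℕ∞)) :
    Finite (ConnectedComponents {x : ℝ | t ≤ f x}) ∧
      Nat.card (ConnectedComponents {x : ℝ | t ≤ f x}) ≤ (v + 1) / 2 := by
  set S : Set ℝ := {x : ℝ | t ≤ f x}
  have hrep : ∀ c : ConnectedComponents S, ∃ y : S, t < f y ∧ (y : ConnectedComponents S) = c := by
    intro c
    obtain ⟨x, rfl⟩ := ConnectedComponents.surjective_coe c
    obtain ⟨y, hyx, hy⟩ := hcomp x x.2
    exact ⟨⟨y, connectedComponentIn_subset _ _ hyx⟩, hy,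
      ConnectedComponents.coe_eq_coe_iff_mem_connectedComponentIn.2 hyx⟩
  choose rep hrep_pos hrep_coe using hrep
  have hrep_inj : Function.Injective fun c => (rep c : ℝ) := fun c c' h => by
    rw [← hrep_coe c, ← hrep_coe c', Subtype.val_injective h]
  have hrep_sep : ∀ c c', (rep c' : ℝ) ∈ connectedComponentIn S (rep c) → c' = c :=
    fun c c' h => by
      rw [← hrep_coe c, ← hrep_coe c',
        ConnectedComponents.coe_eq_coe_iff_mem_connectedComponentIn.2 h]
  refine finite_and_natCard_le_of_forall_card_le fun T => ?_
  have key := two_mul_card_le_signVar hout (T.image fun c => (rep c : ℝ))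
    (by simpa using fun c _ => hrep_pos c) ?_
  · rw [card_image_of_injective T hrep_inj, hv] at key
    have : 2 * #T ≤ v := by exact_mod_cast key
    omega
  simp only [mem_image]
  rintro _ ⟨c, -, rfl⟩ _ ⟨c', -, rfl⟩ hlt
  obtain ⟨z, hz, hzS⟩ := exists_mem_Ioo_notMem_of_notMem_connectedComponentIn (rep c).2
    (rep c').2 hlt.le fun hmem => hlt.ne (by rw [hrep_sep c c' hmem])
  exact ⟨z, hz, not_le.1 hzS⟩

/-- **Component count of a superlevel set is bounded by sign variations.** If `f` is
continuous, `f < t` outside `[-R, R]`, every connected component of `S = {f ≥ t}` contains a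
point where `f > t`, and `v(f - t) = v < ∞`, then `S` has finitely many connected components,
at most `⌊(v+1)/2⌋`. -/
theorem component_count_le_sign_variations
    (f : ℝ → ℝ) (hf : Continuous f) (t : ℝ) (R : ℝ) (hR : 0 < R)
    (hout : ∀ x : ℝ, R ≤ |x| → f x < t)
    (hcomp : ∀ x ∈ {x : ℝ | t ≤ f x},
      ∃ y ∈ connectedComponentIn {x : ℝ | t ≤ f x} x, t < f y)
    (v : ℕ) (hv : signVar (fun x => f x - t) = (v : ℕ∞)) :
    Finite (ConnectedComponents {x : ℝ | t ≤ f x}) ∧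
      Nat.card (ConnectedComponents {x : ℝ | t ≤ f x}) ≤ (v + 1) / 2 :=
  component_count_le_sign_variations_general f t R hout hcomp v hv
end

section
/- Let σ > 0, let f : ℝ → ℝ be nonnegative, bounded and measurable, let t > 0, and let b₁ < a₂ with gap width δ := a₂ − b₁. Suppose f(x) ≥ t for Lebesgue-almost every x outside the open interval (b₁, a₂). Then for every x ∈ [b₁, a₂], (φ_σ * f)(x) ≥ t · ∫_{|u| ≥ δ/2} φ_σ(u) du. In particular, if ε > 0 satisfies ∫_{|u| ≤ δ/2} φ_σ(u) du ≤ ε/t, then (φ_σ * f)(x) ≥ t − ε for all x ∈ [b₁, a₂], so the smoothed function fills the valley above level t − ε. -/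
/-! For `x` in the gap, `f (x - u) ≥ t` for almost every `u` outside an interval of length `δ`,
so the smoothed value at `x` is at least `t` times the Gaussian mass outside that interval.
Among all intervals of a given length, the centred one carries the most mass of a symmetric
density that decreases in `|u|`, so that mass is at least the mass of `{|u| ≥ δ / 2}`. -/

open MeasureTheory

open Set ProbabilityTheory

section SymmetricDecreasing

variable {φ : ℝ → ℝ}

theorem intervalIntegral_le_intervalIntegral_centered (hφ : Integrable φ)
    (hdec : ∀ u v, |u| ≤ |v| → φ v ≤ φ u) {δ : ℝ} (hδ : 0 ≤ δ) (a : ℝ) :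
    ∫ u in a..a + δ, φ u ≤ ∫ u in -(δ / 2)..δ / 2, φ u := by
  have hii : ∀ a b, IntervalIntegrable φ volume a b := fun _ _ => hφ.intervalIntegrable
  -- Moving the window right of centre trades the mass at `v - δ` for the mass at `v`,
  -- which is smaller since `|v - δ| ≤ |v|` for `v ≥ δ / 2`.
  have hright :
      ∀ a, -(δ / 2) ≤ a → ∫ u in a..a + δ, φ u ≤ ∫ u in -(δ / 2)..δ / 2, φ u := by
    intro a ha
    have hshift : ∫ u in -(δ / 2)..a, φ u = ∫ v in δ / 2..a + δ, φ (v - δ) := by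
      rw [intervalIntegral.integral_comp_sub_right]; ring_nf
    have hcmp : ∫ v in δ / 2..a + δ, φ v ≤ ∫ v in δ / 2..a + δ, φ (v - δ) :=
      intervalIntegral.integral_mono_on (by linarith) (hii _ _)
        (hφ.comp_sub_right δ).intervalIntegrable fun v hv =>
          hdec _ _ (abs_le_abs (by linarith) (by linarith [hv.1]))
    have hsplit := intervalIntegral.integral_interval_sub_interval_comm' (hii a (a + δ))
      (hii (-(δ / 2)) (δ / 2)) (hii a (-(δ / 2)))
    linarith
  have heven : ∀ u, φ (-u) = φ u := fun u =>
    le_antisymm (hdec _ _ (abs_neg u).ge) (hdec _ _ (abs_neg u).le)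
  rcases le_total (-(δ / 2)) a with ha | ha
  · exact hright a ha
  · calc ∫ u in a..a + δ, φ u = ∫ u in -a - δ..-a - δ + δ, φ u := by
          rw [sub_add_cancel, ← neg_add', ← intervalIntegral.integral_comp_neg]
          simp only [heven]
      _ ≤ _ := hright _ (by linarith)

theorem setIntegral_abs_ge_le_setIntegral_compl_Ioo (hφ : Integrable φ)
    (hdec : ∀ u v, |u| ≤ |v| → φ v ≤ φ u) {a b : ℝ} (hab : a ≤ b) :
    ∫ u in {u | (b - a) / 2 ≤ |u|}, φ u ≤ ∫ u in (Ioo a b)ᶜ, φ u := by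
  have hset : {u : ℝ | (b - a) / 2 ≤ |u|} = (Ioo (-((b - a) / 2)) ((b - a) / 2))ᶜ := by
    ext u; rw [mem_ofPred_eq, mem_compl_iff, mem_Ioo, ← abs_lt, not_lt]
  have hIoo : ∀ c d, c ≤ d → ∫ u in Ioo c d, φ u = ∫ u in c..d, φ u := fun c d h => by
    rw [intervalIntegral.integral_of_le h, integral_Ioc_eq_integral_Ioo]
  have := intervalIntegral_le_intervalIntegral_centered hφ hdec (sub_nonneg.2 hab) a
  rw [add_sub_cancel] at this
  rw [hset, setIntegral_compl measurableSet_Ioo hφ, setIntegral_compl measurableSet_Ioo hφ,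
    hIoo _ _ hab, hIoo _ _ (by linarith)]
  linarith

end SymmetricDecreasing

theorem mul_setIntegral_le_integral_mul {α : Type*} [MeasurableSpace α] {μ : Measure α}
    {φ g : α → ℝ} {s : Set α} {t : ℝ} (hs : MeasurableSet s) (hφ : Integrable φ μ)
    (hφ₀ : ∀ u, 0 ≤ φ u) (hg₀ : ∀ u, 0 ≤ g u) (hφg : Integrable (fun u => φ u * g u) μ)
    (hgt : ∀ᵐ u ∂μ, u ∈ s → t ≤ g u) :
    t * ∫ u in s, φ u ∂μ ≤ ∫ u, φ u * g u ∂μ :=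
  calc t * ∫ u in s, φ u ∂μ = ∫ u in s, φ u * t ∂μ := by rw [integral_mul_const, mul_comm]
    _ ≤ ∫ u in s, φ u * g u ∂μ :=
        setIntegral_mono_on_ae ((hφ.mul_const t).integrableOn) hφg.integrableOn hs
          (hgt.mono fun u hu hus => mul_le_mul_of_nonneg_left (hu hus) (hφ₀ u))
    _ ≤ ∫ u, φ u * g u ∂μ :=
        setIntegral_le_integral hφg (ae_of_all _ fun u => mul_nonneg (hφ₀ u) (hg₀ u))

section Gaussian

variable {σ : ℝ}

theorem gaussianKernel_eq_gaussianPDFReal (hσ : 0 < σ) :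
    gaussianKernel σ = gaussianPDFReal 0 (σ ^ 2).toNNReal := by
  ext u
  simp only [gaussianKernel, gaussianPDFReal, Real.coe_toNNReal _ (sq_nonneg σ), sub_zero,
    Real.sqrt_mul' _ (sq_nonneg σ), Real.sqrt_sq hσ.le]
  rw [mul_comm σ]

theorem gaussianKernel_nonneg (hσ : 0 ≤ σ) (u : ℝ) : 0 ≤ gaussianKernel σ u := by
  unfold gaussianKernel; positivity

theorem integrable_gaussianKernel (hσ : 0 < σ) : Integrable (gaussianKernel σ) := by
  rw [gaussianKernel_eq_gaussianPDFReal hσ]; exact integrable_gaussianPDFReal _ _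

theorem integral_gaussianKernel (hσ : 0 < σ) : ∫ u, gaussianKernel σ u = 1 := by
  rw [gaussianKernel_eq_gaussianPDFReal hσ]
  exact integral_gaussianPDFReal_eq_one _ (Real.toNNReal_pos.2 (by positivity)).ne'

theorem gaussianKernel_le_of_abs_le (hσ : 0 ≤ σ) {u v : ℝ} (h : |u| ≤ |v|) :
    gaussianKernel σ v ≤ gaussianKernel σ u := by
  have := sq_le_sq.2 h
  unfold gaussianKernel
  gcongr

theorem one_sub_setIntegral_abs_le_le_setIntegral_abs_ge (hσ : 0 < σ) (r : ℝ) :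
    1 - ∫ u in {u | |u| ≤ r}, gaussianKernel σ u ≤
      ∫ u in {u | r ≤ |u|}, gaussianKernel σ u := by
  have hs : MeasurableSet {u : ℝ | |u| ≤ r} := measurableSet_le measurable_abs measurable_const
  rw [← integral_gaussianKernel hσ, ← setIntegral_compl hs (integrable_gaussianKernel hσ)]
  exact setIntegral_mono_set (integrable_gaussianKernel hσ).integrableOn
    (ae_of_all _ (gaussianKernel_nonneg hσ.le)) (ae_of_all _ fun u hu => le_of_not_ge hu)

end Gaussian

theorem valley_filling_general
    (σ : ℝ) (hσ : 0 < σ) (f : ℝ → ℝ)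
    (hnn : ∀ x, 0 ≤ f x) (hbd : ∃ C, ∀ x, |f x| ≤ C) (hmeas : Measurable f)
    (t : ℝ) (ht : 0 < t) (b₁ a₂ : ℝ) (δ : ℝ) (hδ : δ = a₂ - b₁)
    (hf : ∀ᵐ x ∂volume, x ∉ Set.Ioo b₁ a₂ → t ≤ f x) :
    (∀ x ∈ Set.Icc b₁ a₂,
        t * ∫ u in {u : ℝ | δ / 2 ≤ |u|}, gaussianKernel σ u
          ≤ ∫ u, gaussianKernel σ u * f (x - u)) ∧
      ∀ ε > (0 : ℝ), (∫ u in {u : ℝ | |u| ≤ δ / 2}, gaussianKernel σ u) ≤ ε / t →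
        ∀ x ∈ Set.Icc b₁ a₂, t - ε ≤ ∫ u, gaussianKernel σ u * f (x - u) := by
  obtain ⟨C, hC⟩ := hbd
  have hφ := integrable_gaussianKernel hσ
  have main : ∀ x ∈ Icc b₁ a₂, t * ∫ u in {u : ℝ | δ / 2 ≤ |u|}, gaussianKernel σ u
      ≤ ∫ u, gaussianKernel σ u * f (x - u) := by
    intro x hx
    set S := ((x - ·) ⁻¹' Ioo b₁ a₂)ᶜ with hS
    have hgap : ∫ u in {u : ℝ | δ / 2 ≤ |u|}, gaussianKernel σ u ≤
        ∫ u in S, gaussianKernel σ u := by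
      rw [hS, preimage_const_sub_Ioo, hδ, show a₂ - b₁ = (x - b₁) - (x - a₂) by ring]
      exact setIntegral_abs_ge_le_setIntegral_compl_Ioo hφ
        (fun _ _ => gaussianKernel_le_of_abs_le hσ.le) (by linarith [hx.1, hx.2])
    have hf_x : ∀ᵐ u, u ∈ S → t ≤ f (x - u) :=
      (Measure.measurePreserving_sub_left volume x).quasiMeasurePreserving.ae hf
    have hφf : Integrable fun u => gaussianKernel σ u * f (x - u) :=
      hφ.mul_bdd (hmeas.comp (measurable_const_sub x)).aestronglyMeasurable
        (ae_of_all _ fun u => hC (x - u))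
    calc _ ≤ t * ∫ u in S, gaussianKernel σ u := mul_le_mul_of_nonneg_left hgap ht.le
      _ ≤ _ := mul_setIntegral_le_integral_mul
          (measurableSet_Ioo.preimage (measurable_const_sub x)).compl hφ
          (gaussianKernel_nonneg hσ.le) (fun u => hnn (x - u)) hφf hf_x
  refine ⟨main, fun ε _ hεt x hx => ?_⟩
  calc t - ε = t * (1 - ε / t) := by field_simp
    _ ≤ t * (1 - ∫ u in {u : ℝ | |u| ≤ δ / 2}, gaussianKernel σ u) := by gcongr
    _ ≤ t * ∫ u in {u : ℝ | δ / 2 ≤ |u|}, gaussianKernel σ u :=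
        mul_le_mul_of_nonneg_left (one_sub_setIntegral_abs_le_le_setIntegral_abs_ge hσ _) ht.le
    _ ≤ _ := main x hx

/-- **Valley-filling inequality.** If the nonnegative bounded measurable `f` satisfies
`f ≥ t` a.e. outside the gap `(b₁, a₂)` of width `δ = a₂ - b₁`, then throughout `[b₁, a₂]`
the Gaussian-smoothed function is at least `t · ∫_{|u| ≥ δ/2} φ_σ(u) du`; in particular, if
`∫_{|u| ≤ δ/2} φ_σ(u) du ≤ ε/t` then the smoothed function is at least `t - ε` on the gap. -/
theorem valley_filling
    (σ : ℝ) (hσ : 0 < σ) (f : ℝ → ℝ)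
    (hnn : ∀ x, 0 ≤ f x) (hbd : ∃ C, ∀ x, |f x| ≤ C) (hmeas : Measurable f)
    (t : ℝ) (ht : 0 < t) (b₁ a₂ : ℝ) (hlt : b₁ < a₂) (δ : ℝ) (hδ : δ = a₂ - b₁)
    (hf : ∀ᵐ x ∂volume, x ∉ Set.Ioo b₁ a₂ → t ≤ f x) :
    (∀ x ∈ Set.Icc b₁ a₂,
        t * ∫ u in {u : ℝ | δ / 2 ≤ |u|}, gaussianKernel σ u
          ≤ ∫ u, gaussianKernel σ u * f (x - u)) ∧
      ∀ ε > (0 : ℝ), (∫ u in {u : ℝ | |u| ≤ δ / 2}, gaussianKernel σ u) ≤ ε / t →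
        ∀ x ∈ Set.Icc b₁ a₂, t - ε ≤ ∫ u, gaussianKernel σ u * f (x - u) :=
  valley_filling_general σ hσ f hnn hbd hmeas t ht b₁ a₂ δ hδ hf
end

section
/- Let ε ≥ 0, M > 0, t ∈ ℝ, N ≥ 1, and let f, g : ℝ → ℝ be continuous with sup_{y} |f(y) − g(y)| ≤ ε. Suppose {y : f(y) ≥ t} = ⋃_{j=1}^N [ℓ_j, u_j] and {y : g(y) ≥ t − ε} = ⋃_{j=1}^N [ℓ̃_j, ũ_j], each a disjoint union of N nonempty compact intervals, with f(ℓ_j) = f(u_j) = t and g(ℓ̃_j) = g(ũ_j) = t − ε for every j. Assume further that for each j, |f(y₁) − f(y₂)| ≥ M |y₁ − y₂| whenever y₁, y₂ both lie in the closed interval with endpoints ℓ_j and ℓ̃_j, and likewise whenever y₁, y₂ both lie in the closed interval with endpoints u_j and ũ_j. Then the total lengths satisfy | Σ_{j=1}^N (ũ_j − ℓ̃_j) − Σ_{j=1}^N (u_j − ℓ_j) | ≤ 4Nε/M. In particular, when g = φ_σ * f for an L-Lipschitz f and ε = Lσ√(2/π), the total interval length changes by at most (4NLσ/M)√(2/π).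 -/
/-!
At a perturbed endpoint `b` we have `g b = t - ε`, so `|f b - t| ≤ 2ε`, while the matching
endpoint `a` has `f a = t`; the reverse-Lipschitz bound turns `|f a - f b| ≤ 2ε` into
`|a - b| ≤ 2ε/M`. Each interval has two endpoints, so its length moves by at most `4ε/M`.
-/

theorem dist_le_of_reverse_lipschitz_of_levels {α : Type*} [PseudoMetricSpace α]
    {f g : α → ℝ} {ε M t : ℝ} {a b : α} (hM : 0 < M) (hfg : |f b - g b| ≤ ε)
    (hfa : f a = t) (hgb : g b = t - ε) (hrev : M * dist a b ≤ |f a - f b|) :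
    dist a b ≤ 2 * ε / M := by
  have hfab : |f a - f b| ≤ 2 * ε := by
    rw [hgb, abs_le] at hfg
    rw [hfa, abs_le]
    constructor <;> linarith
  rw [le_div_iff₀' hM]
  exact hrev.trans hfab

theorem abs_sum_sub_sub_sum_sub_le {ι : Type*} (s : Finset ι) {ℓ u ℓ' u' : ι → ℝ} {δ : ℝ}
    (hℓ : ∀ j ∈ s, |ℓ' j - ℓ j| ≤ δ) (hu : ∀ j ∈ s, |u' j - u j| ≤ δ) :
    |∑ j ∈ s, (u' j - ℓ' j) - ∑ j ∈ s, (u j - ℓ j)| ≤ 2 * s.card * δ := by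
  rw [← Finset.sum_sub_distrib]
  calc |∑ j ∈ s, ((u' j - ℓ' j) - (u j - ℓ j))|
      ≤ ∑ j ∈ s, |(u' j - u j) - (ℓ' j - ℓ j)| := by
        simpa only [sub_sub_sub_comm] using Finset.abs_sum_le_sum_abs _ s
    _ ≤ ∑ _j ∈ s, 2 * δ := Finset.sum_le_sum fun j hj => by
        linarith [abs_sub (u' j - u j) (ℓ' j - ℓ j), hu j hj, hℓ j hj]
    _ = 2 * s.card * δ := by rw [Finset.sum_const, nsmul_eq_mul]; ring

theorem interval_length_bound_general
    (ε M t : ℝ) (hM : 0 < M) (N : ℕ)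
    (f g : ℝ → ℝ)
    (hfg : ∀ y, |f y - g y| ≤ ε)
    (ℓ u ℓ' u' : Fin N → ℝ)
    (hfl : ∀ j, f (ℓ j) = t) (hfu : ∀ j, f (u j) = t)
    (hgl : ∀ j, g (ℓ' j) = t - ε) (hgu : ∀ j, g (u' j) = t - ε)
    (hrevl : ∀ j, ∀ y₁ ∈ Set.uIcc (ℓ j) (ℓ' j), ∀ y₂ ∈ Set.uIcc (ℓ j) (ℓ' j),
        M * |y₁ - y₂| ≤ |f y₁ - f y₂|)
    (hrevu : ∀ j, ∀ y₁ ∈ Set.uIcc (u j) (u' j), ∀ y₂ ∈ Set.uIcc (u j) (u' j),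
        M * |y₁ - y₂| ≤ |f y₁ - f y₂|) :
    |(∑ j, (u' j - ℓ' j)) - ∑ j, (u j - ℓ j)| ≤ 4 * N * ε / M := by
  have hℓ : ∀ j ∈ Finset.univ, |ℓ' j - ℓ j| ≤ 2 * ε / M := fun j _ => by
    rw [abs_sub_comm, ← Real.dist_eq]
    exact dist_le_of_reverse_lipschitz_of_levels hM (hfg _) (hfl j) (hgl j)
      (hrevl j _ Set.left_mem_uIcc _ Set.right_mem_uIcc)
  have hu : ∀ j ∈ Finset.univ, |u' j - u j| ≤ 2 * ε / M := fun j _ => by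
    rw [abs_sub_comm, ← Real.dist_eq]
    exact dist_le_of_reverse_lipschitz_of_levels hM (hfg _) (hfu j) (hgu j)
      (hrevu j _ Set.left_mem_uIcc _ Set.right_mem_uIcc)
  calc _ ≤ 2 * (Finset.univ : Finset (Fin N)).card * (2 * ε / M) :=
        abs_sum_sub_sub_sum_sub_le _ hℓ hu
    _ = 4 * N * ε / M := by rw [Finset.card_univ, Fintype.card_fin]; ring

/-- **Interval-length bound.** If `|f - g| ≤ ε`, the superlevel sets `{f ≥ t}` and
`{g ≥ t - ε}` are disjoint unions of `N` nonempty compact intervals whose endpoints attain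
the respective levels, and `f` satisfies a reverse-Lipschitz bound with constant `M` between
each pair of corresponding endpoints, then the total lengths differ by at most `4Nε/M`. -/
theorem interval_length_bound
    (ε M t : ℝ) (hε : 0 ≤ ε) (hM : 0 < M) (N : ℕ) (hN : 1 ≤ N)
    (f g : ℝ → ℝ) (hf : Continuous f) (hg : Continuous g)
    (hfg : ∀ y, |f y - g y| ≤ ε)
    (ℓ u ℓ' u' : Fin N → ℝ)
    (hne : ∀ j, ℓ j ≤ u j) (hne' : ∀ j, ℓ' j ≤ u' j)
    (hSf : {y : ℝ | t ≤ f y} = ⋃ j, Set.Icc (ℓ j) (u j))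
    (hSg : {y : ℝ | t - ε ≤ g y} = ⋃ j, Set.Icc (ℓ' j) (u' j))
    (hdisj : ∀ i j, i ≠ j → Disjoint (Set.Icc (ℓ i) (u i)) (Set.Icc (ℓ j) (u j)))
    (hdisj' : ∀ i j, i ≠ j → Disjoint (Set.Icc (ℓ' i) (u' i)) (Set.Icc (ℓ' j) (u' j)))
    (hfl : ∀ j, f (ℓ j) = t) (hfu : ∀ j, f (u j) = t)
    (hgl : ∀ j, g (ℓ' j) = t - ε) (hgu : ∀ j, g (u' j) = t - ε)
    (hrevl : ∀ j, ∀ y₁ ∈ Set.uIcc (ℓ j) (ℓ' j), ∀ y₂ ∈ Set.uIcc (ℓ j) (ℓ' j),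
        M * |y₁ - y₂| ≤ |f y₁ - f y₂|)
    (hrevu : ∀ j, ∀ y₁ ∈ Set.uIcc (u j) (u' j), ∀ y₂ ∈ Set.uIcc (u j) (u' j),
        M * |y₁ - y₂| ≤ |f y₁ - f y₂|) :
    |(∑ j, (u' j - ℓ' j)) - ∑ j, (u j - ℓ j)| ≤ 4 * N * ε / M :=
  interval_length_bound_general ε M t hM N f g hfg ℓ u ℓ' u' hfl hfu hgl hgu hrevl hrevu
end
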